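/- arXiv:1012.3528 — 8 statements merged into one kernel-verified Lean document; each statement's English description precedes it below -/
import Mathlib

section
/- Let k ↦ m_k be a bijection of the nonnegative integers ℤ≥0, let β > 1 be real, and define F_β = {m_k : m_k ≤ β·k}. Then for every natural number N, the cardinality of F_β ∩ [0, N] is at least ((β-1)/β)·N. -/
open Classical in
theorem stmt0 (m : ℕ → ℕ) (hm : Function.Bijective m) (β : ℝ) (hβ : 1 < β) (N : ℕ) :
    ((β - 1) / β) * N ≤
      (((Finset.range (N + 1)).filter
        (fun n => ∃ k : ℕ, m k = n ∧ (m k : ℝ) ≤ β * k)).card : ℝ) := by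
  have hβ0 : (0:ℝ) < β := lt_trans one_pos hβ
  set S := (Finset.range (N + 1)).filter
      (fun n => ∃ k : ℕ, m k = n ∧ (m k : ℝ) ≤ β * k) with hS
  set T := (Finset.range (N + 1)) \ S with hT
  let e := Equiv.ofBijective m hm
  have he : ∀ n, m (e.symm n) = n := fun n => e.apply_symm_apply n
  -- T injects into range ⌈N/β⌉
  have hTcard : T.card ≤ Nat.ceil ((N:ℝ)/β) := by
    rw [← Finset.card_range (Nat.ceil ((N:ℝ)/β))]
    apply Finset.card_le_card_of_injOn (fun n => e.symm n)
    · intro n hn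
      simp only [Finset.mem_coe, hT, Finset.mem_sdiff, hS, Finset.mem_filter, Finset.mem_range] at hn
      obtain ⟨hnN, hn2⟩ := hn
      push_neg at hn2
      have hmk : m (e.symm n) = n := he n
      have := hn2 (hnN) (e.symm n) hmk
      rw [hmk] at this
      have hlt : (e.symm n : ℝ) < (N:ℝ)/β := by
        rw [lt_div_iff₀ hβ0]
        have hnle : (n:ℝ) ≤ N := by exact_mod_cast Nat.lt_succ_iff.mp hnN
        nlinarith
      simpa [Nat.lt_ceil] using hlt
    · intro a _ b _ h
      have : e.symm a = e.symm b := h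
      have := congrArg e this
      simpa using this
  have hsum : S.card + T.card = N + 1 := by
    have hd : T.card = (N + 1) - S.card := by
      rw [hT, Finset.card_sdiff_of_subset (Finset.filter_subset _ _), Finset.card_range]
    have hle : S.card ≤ N + 1 := by
      calc S.card ≤ (Finset.range (N+1)).card := Finset.card_le_card (Finset.filter_subset _ _)
        _ = N + 1 := Finset.card_range _
    omega
  have hceil : (Nat.ceil ((N:ℝ)/β) : ℝ) < (N:ℝ)/β + 1 :=
    Nat.ceil_lt_add_one (by positivity)
  have hScard : (N + 1 : ℝ) - ((N:ℝ)/β + 1) ≤ S.card := by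
    have h1 : (T.card : ℝ) ≤ (N:ℝ)/β + 1 := le_trans (by exact_mod_cast hTcard) hceil.le
    have h2 : (S.card : ℝ) + T.card = N + 1 := by exact_mod_cast hsum
    linarith
  have : ((β - 1) / β) * N = (N + 1 : ℝ) - ((N:ℝ)/β + 1) := by
    field_simp
    ring
  linarith
end

section
/- Let (a_k) be a real sequence, (b_k) a positive non-increasing sequence tending to 0, and suppose the non-increasing rearrangement a*_k of (|a_k|) satisfies a*_k ≤ b_k for all k. Then for any β > 1 there exists a strictly increasing sequence of indices k_1 < k_2 < … such that |a_{k_l}| ≤ b_{⌊k_l/β⌋} and k_l ≤ ⌊β·l/(β−1)⌋ + 1 for all l. -/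
theorem stmt2 (a b : ℕ → ℝ) (hbpos : ∀ k, 0 < b k) (hbmono : Antitone b)
    (hb0 : Filter.Tendsto b Filter.atTop (nhds 0))
    (σ : ℕ → ℕ) (hσ : Function.Bijective σ)
    (hmono : Antitone (fun j => |a (σ j)|))
    (hmaj : ∀ j, |a (σ j)| ≤ b j)
    (β : ℝ) (hβ : 1 < β) :
    ∃ k : ℕ → ℕ, StrictMono k ∧
      (∀ l, |a (k l)| ≤ b ⌊(k l : ℝ) / β⌋₊) ∧
      (∀ l, k l ≤ ⌊β * l / (β - 1)⌋₊ + 1) := by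
  classical
  have hβ0 : (0:ℝ) < β := lt_trans one_pos hβ
  set p : ℕ → Prop := fun n => |a n| ≤ b ⌊(n : ℝ) / β⌋₊ with hp
  set e : ℕ ≃ ℕ := Equiv.ofBijective σ hσ with he
  have hbad : ∀ n, ¬ p n → (e.symm n : ℕ) < ⌊(n : ℝ) / β⌋₊ := by
    intro n hn
    by_contra h
    push_neg at h
    apply hn
    have h2 : σ (e.symm n) = n := e.apply_symm_apply n
    have h1 : |a n| ≤ b (e.symm n) := by
      have := hmaj (e.symm n); rwa [h2] at this
    exact h1.trans (hbmono h)
  have hcount : ∀ N : ℕ, N + 1 ≤ Nat.count p (N+1) + ⌊(N:ℝ)/β⌋₊ := by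
    intro N
    have hcard : ((Finset.range (N+1)).filter (fun n => ¬ p n)).card
        ≤ ⌊(N:ℝ)/β⌋₊ := by
      have hmap : ∀ n ∈ (Finset.range (N+1)).filter (fun n => ¬ p n),
          (e.symm n : ℕ) ∈ Finset.range ⌊(N:ℝ)/β⌋₊ := by
        intro n hn
        simp only [Finset.mem_filter, Finset.mem_range] at hn ⊢
        refine lt_of_lt_of_le (hbad n hn.2) (Nat.floor_le_floor ?_)
        gcongr
        exact_mod_cast Nat.lt_succ_iff.mp hn.1
      have := Finset.card_le_card_of_injOn _ hmap
        (fun x _ y _ h => e.symm.injective h)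
      simpa using this
    have hsplit : Nat.count p (N+1)
        + ((Finset.range (N+1)).filter (fun n => ¬ p n)).card = N+1 := by
      rw [Nat.count_eq_card_filter_range]
      simpa using Finset.card_filter_add_card_filter_not
        (s := Finset.range (N+1)) (p := p)
    omega
  have hkey : ∀ l : ℕ, l < Nat.count p (⌊β * l / (β - 1)⌋₊ + 2) := by
    intro l
    obtain ⟨N, hN⟩ : ∃ N, N = ⌊β * (l:ℝ) / (β - 1)⌋₊ + 1 := ⟨_, rfl⟩
    rw [show ⌊β * (l:ℝ) / (β - 1)⌋₊ + 2 = N + 1 by omega]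
    have h1 := hcount N
    have hx : (β * l / (β - 1)) < (N : ℝ) := by
      rw [hN]; push_cast; exact Nat.lt_floor_add_one _
    have hβ1 : (0:ℝ) < β - 1 := by linarith
    have hx2 : β * l < N * (β - 1) := by
      rwa [div_lt_iff₀ hβ1] at hx
    have h2 : (N:ℝ)/β + l ≤ N := by
      rw [div_add' _ _ _ hβ0.ne', div_le_iff₀ hβ0]
      nlinarith
    have h3 : (⌊(N:ℝ)/β⌋₊ : ℝ) ≤ (N:ℝ)/β := Nat.floor_le (by positivity)
    have h4 : ⌊(N:ℝ)/β⌋₊ + l ≤ N := by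
      have : ((⌊(N:ℝ)/β⌋₊ + l : ℕ) : ℝ) ≤ (N : ℝ) := by push_cast; linarith
      exact_mod_cast this
    omega
  have hinf : (setOf p).Infinite := by
    by_contra h
    rw [Set.not_infinite] at h
    have h1 := hkey h.toFinset.card
    have h2 := Nat.count_le_card h (⌊β * (h.toFinset.card:ℝ) / (β - 1)⌋₊ + 2)
    exact absurd (h1.trans_le h2) (lt_irrefl _)
  refine ⟨Nat.nth p, Nat.nth_strictMono hinf, fun l => Nat.nth_mem_of_infinite hinf l,
    fun l => ?_⟩
  have := Nat.nth_lt_of_lt_count (hkey l)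
  omega
end

section
/- Under the hypotheses of the reordering proposition (m : ℕ → ℕ a bijection, β > 1, F_β = {m_k : m_k ≤ β k}), the partial sums of reciprocals over F_β satisfy limsup_{N→∞} (log N)^{-1} · Σ_{m ∈ F_β, 0 < m ≤ N} 1/m ≥ (β−1)/β. -/
open Filter Finset

private lemma harmonic_cast (N : ℕ) :
    (harmonic N : ℝ) = ∑ j ∈ Finset.Icc 1 N, (1 / (j : ℝ)) := by
  rw [harmonic_eq_sum_Icc]
  push_cast
  simp [one_div]

open Classical in
private lemma keybound (m : ℕ → ℕ) (hm : Function.Bijective m) (β : ℝ) (hβ : 1 < β) (N : ℕ) :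
    (1 - 1/β) * ∑ j ∈ Finset.Icc 1 N, (1 / (j : ℝ)) - 1 ≤
      ∑ j ∈ (Finset.Icc 1 N).filter
          (fun j => ∃ k : ℕ, m k = j ∧ (m k : ℝ) ≤ β * k), (1 / (j : ℝ)) := by
  have hβ0 : (0:ℝ) < β := lt_trans one_pos hβ
  set P : ℕ → Prop := fun j => ∃ k : ℕ, m k = j ∧ (m k : ℝ) ≤ β * k with hP
  set H : ℝ := ∑ j ∈ Finset.Icc 1 N, (1 / (j : ℝ)) with hH
  have hsplit := Finset.sum_filter_add_sum_filter_not (Finset.Icc 1 N) P (fun j => (1 / (j : ℝ)))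
  set B := (Finset.Icc 1 N).filter (fun j => ¬ P j) with hB
  -- inverse function
  set e : ℕ → ℕ := Function.invFun m with he
  have heq : ∀ j, m (e j) = j := fun j => Function.invFun_eq (hm.surjective j)
  have hinj : Function.Injective e := fun a b h => by
    have := heq a; rw [h, heq b] at this; exact this.symm
  set g : ℕ → ℝ := fun k => if k = 0 then 1 else 1 / (β * k) with hg
  have hg0 : ∀ k, 0 ≤ g k := by
    intro k
    by_cases hk : k = 0 <;> simp [hg, hk]
    positivity
  -- pointwise bound on bad set
  have hbad : ∀ j ∈ B, β * (e j) < (j:ℝ) ∧ 1 ≤ j := by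
    intro j hj
    rw [hB, Finset.mem_filter, Finset.mem_Icc] at hj
    refine ⟨?_, hj.1.1⟩
    by_contra hcon
    push_neg at hcon
    exact hj.2 ⟨e j, heq j, by rw [heq j]; exact hcon⟩
  have hT1 : ∑ j ∈ B, (1 / (j : ℝ)) ≤ ∑ j ∈ B, g (e j) := by
    refine Finset.sum_le_sum (fun j hj => ?_)
    obtain ⟨h1, h2⟩ := hbad j hj
    by_cases hk : e j = 0
    · simp only [hg, hk, if_pos]
      rw [div_le_one (by exact_mod_cast Nat.lt_of_lt_of_le Nat.zero_lt_one h2)]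
      exact_mod_cast h2
    · simp only [hg, hk, if_neg, if_false]
      have hpos : (0:ℝ) < β * (e j) := by
        have : (0:ℝ) < (e j : ℝ) := by exact_mod_cast Nat.pos_of_ne_zero hk
        positivity
      exact one_div_le_one_div_of_le hpos (le_of_lt h1)
  have himg : ∑ j ∈ B, g (e j) = ∑ k ∈ B.image e, g k :=
    (Finset.sum_image (fun a _ b _ h => hinj h)).symm
  have hsub : B.image e ⊆ Finset.range (N+1) := by
    intro k hk
    rw [Finset.mem_image] at hk
    obtain ⟨j, hj, rfl⟩ := hk
    obtain ⟨h1, _⟩ := hbad j hj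
    have hjN : j ≤ N := (Finset.mem_Icc.mp (Finset.mem_filter.mp hj).1).2
    have : ((e j : ℝ)) < N := by
      calc (e j : ℝ) = 1 * (e j) := (one_mul _).symm
        _ ≤ β * (e j) := by
            apply mul_le_mul_of_nonneg_right (le_of_lt hβ) (Nat.cast_nonneg _)
        _ < j := h1
        _ ≤ N := by exact_mod_cast hjN
    rw [Finset.mem_range]
    exact Nat.lt_succ_of_le (le_of_lt (by exact_mod_cast this))
  have hT2 : ∑ k ∈ B.image e, g k ≤ ∑ k ∈ Finset.range (N+1), g k :=
    Finset.sum_le_sum_of_subset_of_nonneg hsub (fun k _ _ => hg0 k)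
  have hTg : ∑ k ∈ Finset.range (N+1), g k = 1 + (1/β) * H := by
    rw [Finset.sum_range_succ']
    have : ∀ i : ℕ, g (i+1) = (1/β) * (1/((i:ℝ)+1)) := by
      intro i
      simp only [hg, Nat.succ_ne_zero, if_false, Nat.cast_add, Nat.cast_one]
      rw [one_div, mul_inv]
      ring
    simp only [this]
    rw [← Finset.mul_sum]
    have hHr : H = ∑ i ∈ Finset.range N, (1/((i:ℝ)+1)) := by
      rw [hH, ← harmonic_cast, harmonic]
      push_cast
      simp [one_div]
    rw [← hHr]
    simp [hg]
    ring
  have hT : ∑ j ∈ B, (1 / (j : ℝ)) ≤ 1 + (1/β) * H :=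
    le_trans hT1 (le_trans (le_of_eq himg) (le_trans hT2 (le_of_eq hTg)))
  rw [← hH] at hsplit
  linarith [hsplit, hT]

open Classical in
theorem stmt3 (m : ℕ → ℕ) (hm : Function.Bijective m) (β : ℝ) (hβ : 1 < β) :
    (β - 1) / β ≤
      Filter.limsup
        (fun N : ℕ =>
          (Real.log N)⁻¹ *
            ∑ j ∈ (Finset.Icc 1 N).filter
                (fun j => ∃ k : ℕ, m k = j ∧ (m k : ℝ) ≤ β * k),
              (1 / (j : ℝ)))
        Filter.atTop := by
  have hβ0 : (0:ℝ) < β := lt_trans one_pos hβ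
  set f : ℕ → ℝ := fun N =>
      (Real.log N)⁻¹ *
        ∑ j ∈ (Finset.Icc 1 N).filter
            (fun j => ∃ k : ℕ, m k = j ∧ (m k : ℝ) ≤ β * k), (1 / (j : ℝ)) with hf
  have hSH : ∀ N : ℕ, ∑ j ∈ (Finset.Icc 1 N).filter
      (fun j => ∃ k : ℕ, m k = j ∧ (m k : ℝ) ≤ β * k), (1 / (j : ℝ))
      ≤ ∑ j ∈ Finset.Icc 1 N, (1 / (j : ℝ)) := by
    intro N
    apply Finset.sum_le_sum_of_subset_of_nonneg (Finset.filter_subset _ _)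
    intro j _ _; positivity
  have hlog2 : (0:ℝ) < Real.log 2 := Real.log_pos (by norm_num)
  -- boundedness
  have hub : ∀ N : ℕ, f N ≤ 1 + (Real.log 2)⁻¹ := by
    intro N
    rcases le_or_gt N 1 with hN | hN
    · interval_cases N <;> simp [hf] <;> positivity
    · have hN2 : (2:ℝ) ≤ (N:ℝ) := by exact_mod_cast hN
      have hlogN : (0:ℝ) < Real.log N := Real.log_pos (by linarith)
      have hHle : ∑ j ∈ Finset.Icc 1 N, (1 / (j : ℝ)) ≤ 1 + Real.log N := by
        rw [← harmonic_cast]; exact harmonic_le_one_add_log N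
      have h1 : f N ≤ (Real.log N)⁻¹ * (1 + Real.log N) := by
        apply mul_le_mul_of_nonneg_left (le_trans (hSH N) hHle) (by positivity)
      have h2 : (Real.log N)⁻¹ * (1 + Real.log N) = (Real.log N)⁻¹ + 1 := by
        field_simp
      have h3 : (Real.log N)⁻¹ ≤ (Real.log 2)⁻¹ :=
        one_div_le_one_div_of_le hlog2 (Real.log_le_log (by norm_num) hN2) |>.trans_eq (one_div _) |>.trans_eq' (one_div _)
      linarith
  have hbdd : Filter.IsBoundedUnder (· ≤ ·) Filter.atTop f :=
    Filter.isBoundedUnder_of ⟨1 + (Real.log 2)⁻¹, hub⟩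
  -- lower bound
  have hlow : ∀ N : ℕ, 2 ≤ N → (β - 1)/β - (Real.log N)⁻¹ ≤ f N := by
    intro N hN
    have hN2 : (2:ℝ) ≤ (N:ℝ) := by exact_mod_cast hN
    have hlogN : (0:ℝ) < Real.log N := Real.log_pos (by linarith)
    have hHge : Real.log N ≤ ∑ j ∈ Finset.Icc 1 N, (1 / (j : ℝ)) := by
      rw [← harmonic_cast]
      calc Real.log N ≤ Real.log (N+1) := Real.log_le_log (by linarith) (by linarith)
        _ ≤ harmonic N := by exact_mod_cast log_add_one_le_harmonic N
    have hkey := keybound m hm β hβ N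
    have hcoef : (0:ℝ) ≤ 1 - 1/β := by
      rw [sub_nonneg, div_le_one hβ0]; linarith
    have h1 : (1 - 1/β) * Real.log N - 1 ≤
        ∑ j ∈ (Finset.Icc 1 N).filter
            (fun j => ∃ k : ℕ, m k = j ∧ (m k : ℝ) ≤ β * k), (1 / (j : ℝ)) := by
      refine le_trans ?_ hkey
      have := mul_le_mul_of_nonneg_left hHge hcoef
      linarith
    have h2 : (Real.log N)⁻¹ * ((1 - 1/β) * Real.log N - 1) ≤ f N :=
      mul_le_mul_of_nonneg_left h1 (by positivity)
    have h3 : (Real.log N)⁻¹ * ((1 - 1/β) * Real.log N - 1) =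
        (β - 1)/β - (Real.log N)⁻¹ := by
      have hne : Real.log (N:ℝ) ≠ 0 := ne_of_gt hlogN
      have hbne : β ≠ 0 := ne_of_gt hβ0
      have e1 : (1 - 1/β) = (β-1)/β := by rw [sub_div, div_self hbne]
      rw [mul_sub, mul_one, ← e1, mul_comm (1-1/β) (Real.log (N:ℝ)), ← mul_assoc,
        inv_mul_cancel₀ hne, one_mul]
    linarith
  -- limsup
  have htend : Filter.Tendsto (fun N : ℕ => (Real.log N)⁻¹) Filter.atTop (nhds 0) :=
    (Real.tendsto_log_atTop.comp tendsto_natCast_atTop_atTop).inv_tendsto_atTop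
  refine le_of_forall_pos_le_add (fun ε hε => ?_)
  have hfreq : ∃ᶠ N in Filter.atTop, (β - 1)/β - ε ≤ f N := by
    have hev1 : ∀ᶠ N : ℕ in Filter.atTop, (Real.log N)⁻¹ < ε :=
      htend.eventually_lt_const hε
    have hev2 : ∀ᶠ N : ℕ in Filter.atTop, 2 ≤ N := Filter.eventually_ge_atTop 2
    exact ((hev1.and hev2).mono (fun N hN => by
      have := hlow N hN.2
      linarith [hN.1])).frequently
  have := Filter.le_limsup_of_frequently_le hfreq hbdd
  linarith
end

section
/- If V : [0,∞) → ℝ is bounded, measurable, and rapidly decaying in the sense that for every ϑ > 0 there is C with |V(r)| ≤ C·exp(−r^ϑ) for all r ≥ 0, then for every ε > 0 there is a constant C' such that |∫_0^∞ V(r) r^s dr| ≤ C'·Γ(ε s) for all sufficiently large real s. -/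
open Real Set MeasureTheory

theorem stmt7 (V : ℝ → ℝ) (hmeas : Measurable V)
    (hbdd : ∃ M, ∀ r : ℝ, 0 ≤ r → |V r| ≤ M)
    (hRD : ∀ ϑ : ℝ, 0 < ϑ → ∃ C > 0, ∀ r : ℝ, 0 ≤ r → |V r| ≤ C * Real.exp (-r ^ ϑ)) :
    ∀ ε : ℝ, 0 < ε → ∃ C' > 0, ∃ s₀ : ℝ, ∀ s ≥ s₀, 
      |∫ r in Set.Ioi (0 : ℝ), V r * r ^ s| ≤ C' * Real.Gamma (ε * s) := by
  intro ε hε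
  set ϑ : ℝ := max (2 / ε) 1 with hϑdef
  have hϑ1 : (1 : ℝ) ≤ ϑ := le_max_right _ _
  have hϑpos : 0 < ϑ := lt_of_lt_of_le one_pos hϑ1
  have hϑε : 2 / ε ≤ ϑ := le_max_left _ _
  obtain ⟨C, hC, hV⟩ := hRD ϑ hϑpos
  refine ⟨C * (1 / ϑ), by positivity, max (2 * ϑ) (max 1 (2 / ε)), ?_⟩
  intro s hs
  have hs1 : (1 : ℝ) ≤ s := le_trans (le_trans (le_max_left _ _) (le_max_right _ _)) hs
  have hs2 : 2 * ϑ ≤ s := le_trans (le_max_left _ _) hs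
  have hsε : 2 / ε ≤ s := le_trans (le_trans (le_max_right _ _) (le_max_right _ _)) hs
  have hεs2 : 2 ≤ ε * s := by
    rw [div_le_iff₀ hε] at hsε; linarith [mul_comm s ε]
  have hx2 : 2 ≤ (s + 1) / ϑ := by
    rw [le_div_iff₀ hϑpos]; linarith
  have hxle : (s + 1) / ϑ ≤ ε * s := by
    have h1 : (s + 1) / ϑ ≤ (s + 1) / (2 / ε) := by
      apply div_le_div_of_nonneg_left (by linarith) (by positivity) hϑε
    have h2 : (s + 1) / (2 / ε) = ε * (s + 1) / 2 := by
      field_simp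
    have : ε * (s + 1) / 2 ≤ ε * s := by
      rw [div_le_iff₀ (by norm_num : (0:ℝ) < 2)]; nlinarith
    linarith [h1, h2 ▸ h1]
  -- integrable majorant
  have hint : IntegrableOn (fun r : ℝ => C * (r ^ s * Real.exp (-r ^ ϑ))) (Ioi 0) := by
    exact (integrableOn_rpow_mul_exp_neg_rpow (by linarith) hϑpos).const_mul C
  have hbound : |∫ r in Set.Ioi (0 : ℝ), V r * r ^ s|
      ≤ ∫ r in Set.Ioi (0 : ℝ), C * (r ^ s * Real.exp (-r ^ ϑ)) := by
    rw [← Real.norm_eq_abs]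
    apply norm_integral_le_of_norm_le hint
    filter_upwards [ae_restrict_mem measurableSet_Ioi] with r hr
    have hr0 : 0 ≤ r := le_of_lt hr
    have hrs : 0 ≤ r ^ s := Real.rpow_nonneg hr0 s
    rw [Real.norm_eq_abs, abs_mul, abs_of_nonneg hrs]
    calc |V r| * r ^ s ≤ (C * Real.exp (-r ^ ϑ)) * r ^ s := by
          exact mul_le_mul_of_nonneg_right (hV r hr0) hrs
      _ = C * (r ^ s * Real.exp (-r ^ ϑ)) := by ring
  have heq : ∫ r in Set.Ioi (0 : ℝ), C * (r ^ s * Real.exp (-r ^ ϑ))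
      = C * ((1 / ϑ) * Real.Gamma ((s + 1) / ϑ)) := by
    rw [MeasureTheory.integral_const_mul, integral_rpow_mul_exp_neg_rpow hϑpos (by linarith)]
  have hmono : Real.Gamma ((s + 1) / ϑ) ≤ Real.Gamma (ε * s) := by
    rcases eq_or_lt_of_le hxle with h | h
    · rw [h]
    · exact le_of_lt (Real.Gamma_strictMonoOn_Ici hx2 (le_trans hx2 hxle) h)
  have hΓpos : 0 < Real.Gamma ((s + 1) / ϑ) := Real.Gamma_pos_of_pos (by positivity)
  calc |∫ r in Set.Ioi (0 : ℝ), V r * r ^ s|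
      ≤ C * ((1 / ϑ) * Real.Gamma ((s + 1) / ϑ)) := heq ▸ hbound
    _ ≤ C * (1 / ϑ) * Real.Gamma (ε * s) := by
        rw [← mul_assoc]
        exact mul_le_mul_of_nonneg_left hmono (by positivity)
end

section
/- For the indicator V of [0,b] (b > 0), the complex Bargmann-Toeplitz eigenvalues Λ_k = 2·(∫_0^∞ V(r) r^{2k+2d-1} e^{-r²} dr)/Γ(k+d) satisfy |log Λ_k| / (k log k) → 1 as k → ∞. -/
open Filter Real

private lemma pow_le_exp_mul_fac (n : ℕ) : (n:ℝ)^n ≤ Real.exp n * n.factorial := by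
  have hf : (0:ℝ) < n.factorial := by exact_mod_cast n.factorial_pos
  have h1 : (n:ℝ)^n / n.factorial ≤ Real.exp n := by
    refine le_trans ?_ (Real.sum_le_exp_of_nonneg n.cast_nonneg (n+1))
    exact Finset.single_le_sum (f := fun i => (n:ℝ)^i / i.factorial)
      (fun i _ => by positivity) (Finset.self_mem_range_succ n)
  calc (n:ℝ)^n = ((n:ℝ)^n / n.factorial) * n.factorial := by field_simp
    _ ≤ Real.exp n * n.factorial := mul_le_mul_of_nonneg_right h1 hf.le

private lemma log_fac_le (n : ℕ) : Real.log n.factorial ≤ n * Real.log n := by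
  rcases Nat.eq_zero_or_pos n with h | h
  · simp [h]
  have h1 : ((n.factorial : ℕ):ℝ) ≤ (n:ℝ)^n := by exact_mod_cast n.factorial_le_pow
  calc Real.log n.factorial ≤ Real.log ((n:ℝ)^n) :=
        Real.log_le_log (by exact_mod_cast n.factorial_pos) h1
    _ = n * Real.log n := Real.log_pow n n

private lemma le_log_fac (n : ℕ) : (n:ℝ) * Real.log n - n ≤ Real.log n.factorial := by
  rcases Nat.eq_zero_or_pos n with h | h
  · simp [h]
  have hpos : (0:ℝ) < (n:ℝ)^n := by positivity
  have h2 : Real.log ((n:ℝ)^n) ≤ Real.log (Real.exp n * n.factorial) :=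
    Real.log_le_log hpos (pow_le_exp_mul_fac n)
  rw [Real.log_pow, Real.log_mul (Real.exp_ne_zero _) (by exact_mod_cast n.factorial_pos.ne'),
    Real.log_exp] at h2
  linarith

private lemma int_low (b : ℝ) (hb : 0 < b) (m : ℕ) :
    Real.exp (-b^2) * (b^(m+1)/((m:ℝ)+1)) ≤ ∫ r in (0:ℝ)..b, r ^ m * Real.exp (-r^2) := by
  have h1 : (∫ r in (0:ℝ)..b, Real.exp (-b^2) * r ^ m)
      ≤ ∫ r in (0:ℝ)..b, r ^ m * Real.exp (-r^2) := by
    refine intervalIntegral.integral_mono_on hb.le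
      ((continuous_const.mul (continuous_pow m)).intervalIntegrable _ _)
      (((continuous_pow m).mul (Continuous.rexp (by continuity))).intervalIntegrable _ _) ?_
    intro x hx
    rw [mul_comm]
    exact mul_le_mul_of_nonneg_left
      (Real.exp_le_exp.mpr (by nlinarith [hx.1, hx.2])) (pow_nonneg hx.1 m)
  calc Real.exp (-b^2) * (b^(m+1)/((m:ℝ)+1))
      = ∫ r in (0:ℝ)..b, Real.exp (-b^2) * r ^ m := by
        rw [intervalIntegral.integral_const_mul, integral_pow]
        simp
    _ ≤ _ := h1

private lemma int_high (b : ℝ) (hb : 0 < b) (m : ℕ) :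
    (∫ r in (0:ℝ)..b, r ^ m * Real.exp (-r^2)) ≤ b^(m+1)/((m:ℝ)+1) := by
  have h1 : (∫ r in (0:ℝ)..b, r ^ m * Real.exp (-r^2))
      ≤ ∫ r in (0:ℝ)..b, r ^ m := by
    refine intervalIntegral.integral_mono_on hb.le
      (((continuous_pow m).mul (Continuous.rexp (by continuity))).intervalIntegrable _ _)
      ((continuous_pow m).intervalIntegrable _ _) ?_
    intro x hx
    calc x ^ m * Real.exp (-x^2) ≤ x ^ m * 1 := by
          exact mul_le_mul_of_nonneg_left (Real.exp_le_one_iff.mpr (by nlinarith [hx.1])) (pow_nonneg hx.1 m)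
    _ = x ^ m := mul_one _
  calc (∫ r in (0:ℝ)..b, r ^ m * Real.exp (-r^2)) ≤ ∫ r in (0:ℝ)..b, r ^ m := h1
    _ = b^(m+1)/((m:ℝ)+1) := by rw [integral_pow]; simp

private lemma lam_bounds (b : ℝ) (hb : 0 < b) (d k : ℕ) (hd : 1 ≤ d) :
    Real.exp (-b^2) * b^(2*(k+d)) / ((k+d).factorial : ℝ) ≤
      2 * (∫ r in (0:ℝ)..b, r ^ (2*k+2*d-1) * Real.exp (-r^2)) / Real.Gamma ((k:ℝ)+d) ∧
    2 * (∫ r in (0:ℝ)..b, r ^ (2*k+2*d-1) * Real.exp (-r^2)) / Real.Gamma ((k:ℝ)+d)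
      ≤ b^(2*(k+d)) / ((k+d).factorial : ℝ) := by
  set m := k + d - 1 with hm_def
  have hm : k + d = m + 1 := by omega
  have hcast : ((k:ℝ)+d) = (m:ℝ)+1 := by
    have := congrArg (Nat.cast : ℕ → ℝ) hm; push_cast at this; linarith
  have hΓ : Real.Gamma ((k:ℝ)+d) = (m.factorial : ℝ) := by
    rw [hcast]; exact Real.Gamma_nat_eq_factorial m
  set N : ℝ := (k:ℝ)+d with hN_def
  have hNpos : 0 < N := by
    have : (1:ℝ) ≤ (d:ℝ) := by exact_mod_cast hd
    have : (0:ℝ) ≤ (k:ℝ) := k.cast_nonneg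
    positivity
  have hF : (0:ℝ) < (m.factorial : ℝ) := by exact_mod_cast m.factorial_pos
  have hfac : (((k+d).factorial : ℕ) : ℝ) = N * m.factorial := by
    rw [hm, Nat.factorial_succ]
    push_cast
    rw [hcast]
  set m2 := 2*k+2*d-1 with hm2_def
  have h2 : m2 + 1 = 2*(k+d) := by omega
  have hc : ((m2:ℝ)+1) = 2*N := by
    have := congrArg (Nat.cast : ℕ → ℝ) h2; push_cast at this; linarith
  have hIlow := int_low b hb m2
  have hIhigh := int_high b hb m2
  rw [h2, hc] at hIlow hIhigh
  set I := ∫ r in (0:ℝ)..b, r ^ m2 * Real.exp (-r^2) with hI_def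
  constructor
  · have eq1 : Real.exp (-b^2) * b^(2*(k+d)) / (((k+d).factorial : ℕ) : ℝ)
        = 2 * (Real.exp (-b^2) * (b^(2*(k+d))/(2*N))) / (m.factorial : ℝ) := by
      rw [hfac]; field_simp
    rw [eq1, hΓ]
    gcongr
  · have eq2 : b^(2*(k+d)) / (((k+d).factorial : ℕ) : ℝ)
        = 2 * (b^(2*(k+d))/(2*N)) / (m.factorial : ℝ) := by
      rw [hfac]; field_simp
    rw [eq2, hΓ]
    gcongr

private lemma lim_main (d : ℕ) (hd : 1 ≤ d) (c L : ℝ) :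
    Filter.Tendsto (fun k : ℕ =>
      (c + 2*((k:ℝ)+d)*L - Real.log ((k+d).factorial : ℝ)) / ((k:ℝ)*Real.log k))
      Filter.atTop (nhds (-1)) := by
  have hlogk : Filter.Tendsto (fun k : ℕ => Real.log k) Filter.atTop Filter.atTop :=
    Real.tendsto_log_atTop.comp tendsto_natCast_atTop_atTop
  have hgtop : Filter.Tendsto (fun k : ℕ => (k:ℝ) * Real.log k) Filter.atTop Filter.atTop :=
    Filter.Tendsto.atTop_mul_atTop₀ tendsto_natCast_atTop_atTop hlogk
  have hzero : ∀ a : ℝ, Filter.Tendsto (fun k : ℕ => a / ((k:ℝ)*Real.log k))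
      Filter.atTop (nhds 0) := fun a => Filter.Tendsto.div_atTop tendsto_const_nhds hgtop
  have hdk : Filter.Tendsto (fun k : ℕ => (d:ℝ) / k) Filter.atTop (nhds 0) :=
    Filter.Tendsto.div_atTop tendsto_const_nhds tendsto_natCast_atTop_atTop
  -- (k+d)/k → 1
  have hratio : Filter.Tendsto (fun k : ℕ => ((k:ℝ)+d) / k) Filter.atTop (nhds 1) := by
    have h1 : Filter.Tendsto (fun k : ℕ => 1 + (d:ℝ)/k) Filter.atTop (nhds 1) := by
      simpa using tendsto_const_nhds.add hdk
    refine h1.congr' ?_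
    filter_upwards [Filter.eventually_ge_atTop 1] with k hk
    have hk0 : (k:ℝ) ≠ 0 := by positivity
    field_simp
  -- (k+d)/(k log k) → 0
  have hnlim : Filter.Tendsto (fun k : ℕ => ((k:ℝ)+d) / ((k:ℝ)*Real.log k))
      Filter.atTop (nhds 0) := by
    have h1 : Filter.Tendsto (fun k : ℕ => (((k:ℝ)+d)/k) * (Real.log k)⁻¹)
        Filter.atTop (nhds 0) := by
      simpa using hratio.mul hlogk.inv_tendsto_atTop
    refine h1.congr fun k => ?_
    rw [div_eq_mul_inv, div_eq_mul_inv, mul_assoc, mul_inv]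
  -- log(k+d)/log k → 1
  have hlogratio : Filter.Tendsto (fun k : ℕ => Real.log ((k:ℝ)+d) / Real.log k)
      Filter.atTop (nhds 1) := by
    have hup : Filter.Tendsto (fun k : ℕ => 1 + (d:ℝ) / ((k:ℝ)*Real.log k))
        Filter.atTop (nhds 1) := by simpa using tendsto_const_nhds.add (hzero d)
    refine tendsto_of_tendsto_of_tendsto_of_le_of_le' tendsto_const_nhds hup ?_ ?_
    · filter_upwards [Filter.eventually_ge_atTop 2] with k hk
      have hk1 : (1:ℝ) < (k:ℝ) := by exact_mod_cast hk
      have hlogpos : 0 < Real.log k := Real.log_pos hk1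
      rw [le_div_iff₀ hlogpos, one_mul]
      exact Real.log_le_log (by linarith) (by have : (0:ℝ) ≤ d := d.cast_nonneg; linarith)
    · filter_upwards [Filter.eventually_ge_atTop 2] with k hk
      have hk1 : (1:ℝ) < (k:ℝ) := by exact_mod_cast hk
      have hkpos : (0:ℝ) < k := by linarith
      have hlogpos : 0 < Real.log k := Real.log_pos hk1
      have hdpos : (0:ℝ) ≤ d := d.cast_nonneg
      have key : Real.log ((k:ℝ)+d) ≤ Real.log k + (d:ℝ)/k := by
        have h1 : Real.log ((k:ℝ)+d) - Real.log k = Real.log (((k:ℝ)+d)/k) :=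
          (Real.log_div (by linarith) (by linarith)).symm
        have h2 : Real.log (((k:ℝ)+d)/k) ≤ ((k:ℝ)+d)/k - 1 :=
          Real.log_le_sub_one_of_pos (by positivity)
        have h3 : ((k:ℝ)+d)/k - 1 = (d:ℝ)/k := by field_simp; ring
        linarith
      rw [div_le_iff₀ hlogpos]
      have h4 : (1 + (d:ℝ)/((k:ℝ)*Real.log k)) * Real.log k = Real.log k + (d:ℝ)/k := by
        field_simp
      rw [h4]
      exact key
  -- (k+d)*log(k+d)/(k log k) → 1
  have hnln : Filter.Tendsto (fun k : ℕ =>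
      (((k:ℝ)+d) * Real.log ((k:ℝ)+d)) / ((k:ℝ)*Real.log k)) Filter.atTop (nhds 1) := by
    have h1 := hratio.mul hlogratio
    rw [mul_one] at h1
    refine h1.congr fun k => ?_
    rw [div_mul_div_comm]
  -- log((k+d)!)/(k log k) → 1
  have hC : Filter.Tendsto (fun k : ℕ =>
      Real.log ((k+d).factorial : ℝ) / ((k:ℝ)*Real.log k)) Filter.atTop (nhds 1) := by
    have hlow : Filter.Tendsto (fun k : ℕ =>
        (((k:ℝ)+d) * Real.log ((k:ℝ)+d)) / ((k:ℝ)*Real.log k)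
          - (((k:ℝ)+d)) / ((k:ℝ)*Real.log k)) Filter.atTop (nhds 1) := by
      simpa using hnln.sub hnlim
    refine tendsto_of_tendsto_of_tendsto_of_le_of_le' hlow hnln ?_ ?_
    · filter_upwards [Filter.eventually_ge_atTop 2] with k hk
      have hk1 : (1:ℝ) < (k:ℝ) := by exact_mod_cast hk
      have hgpos : 0 < (k:ℝ)*Real.log k := by
        have := Real.log_pos hk1; positivity
      rw [← sub_div, div_le_div_iff_of_pos_right hgpos]
      have := le_log_fac (k+d)
      push_cast at this ⊢
      linarith
    · filter_upwards [Filter.eventually_ge_atTop 2] with k hk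
      have hk1 : (1:ℝ) < (k:ℝ) := by exact_mod_cast hk
      have hgpos : 0 < (k:ℝ)*Real.log k := by
        have := Real.log_pos hk1; positivity
      rw [div_le_div_iff_of_pos_right hgpos]
      have := log_fac_le (k+d)
      push_cast at this ⊢
      linarith
  have heq : (fun k : ℕ =>
      (c + 2*((k:ℝ)+d)*L - Real.log ((k+d).factorial : ℝ)) / ((k:ℝ)*Real.log k))
      = fun k : ℕ => c / ((k:ℝ)*Real.log k)
          + (2*L) * (((k:ℝ)+d) / ((k:ℝ)*Real.log k))
          - Real.log ((k+d).factorial : ℝ) / ((k:ℝ)*Real.log k) := by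
    funext k; ring
  rw [heq]
  have := ((hzero c).add ((tendsto_const_nhds (x := (2*L : ℝ))).mul hnlim)).sub hC
  simpa using this

theorem stmt8 (b : ℝ) (hb : 0 < b) (d : ℕ) (hd : 1 ≤ d)
    (Λ : ℕ → ℝ)
    (hΛ : ∀ k, Λ k =
      2 * (∫ r in (0 : ℝ)..b, r ^ (2 * k + 2 * d - 1) * Real.exp (-r ^ 2)) /
        Real.Gamma ((k : ℝ) + d)) :
    Filter.Tendsto (fun k : ℕ => |Real.log (Λ k)| / ((k : ℝ) * Real.log k))
      Filter.atTop (nhds 1) := by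
  have hlow := lim_main d hd (-b^2) (Real.log b)
  have hhigh := lim_main d hd 0 (Real.log b)
  have hbounds : ∀ k : ℕ, 0 < Λ k ∧
      (-b^2 + 2*((k:ℝ)+d)*Real.log b - Real.log ((k+d).factorial:ℝ)) ≤ Real.log (Λ k) ∧
      Real.log (Λ k) ≤ (0 + 2*((k:ℝ)+d)*Real.log b - Real.log ((k+d).factorial:ℝ)) := by
    intro k
    obtain ⟨h1, h2⟩ := lam_bounds b hb d k hd
    rw [← hΛ k] at h1 h2
    have hfacpos : (0:ℝ) < ((k+d).factorial : ℝ) := by exact_mod_cast (k+d).factorial_pos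
    have hlo : 0 < Real.exp (-b^2) * b^(2*(k+d)) / ((k+d).factorial:ℝ) := by positivity
    have hΛpos : 0 < Λ k := lt_of_lt_of_le hlo h1
    refine ⟨hΛpos, ?_, ?_⟩
    · calc -b^2 + 2*((k:ℝ)+d)*Real.log b - Real.log ((k+d).factorial:ℝ)
          = Real.log (Real.exp (-b^2) * b^(2*(k+d)) / ((k+d).factorial:ℝ)) := by
            rw [Real.log_div (by positivity) hfacpos.ne',
              Real.log_mul (Real.exp_ne_zero _) (by positivity), Real.log_exp, Real.log_pow]
            push_cast; ring
      _ ≤ Real.log (Λ k) := Real.log_le_log hlo h1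
    · calc Real.log (Λ k) ≤ Real.log (b^(2*(k+d)) / ((k+d).factorial:ℝ)) :=
            Real.log_le_log hΛpos h2
      _ = 0 + 2*((k:ℝ)+d)*Real.log b - Real.log ((k+d).factorial:ℝ) := by
            rw [Real.log_div (by positivity) hfacpos.ne', Real.log_pow]; push_cast; ring
  have hmain : Filter.Tendsto (fun k : ℕ => Real.log (Λ k) / ((k:ℝ)*Real.log k))
      Filter.atTop (nhds (-1)) := by
    refine tendsto_of_tendsto_of_tendsto_of_le_of_le' hlow hhigh ?_ ?_
    · filter_upwards [Filter.eventually_ge_atTop 2] with k hk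
      have hk1 : (1:ℝ) < (k:ℝ) := by exact_mod_cast hk
      have hgpos : 0 < (k:ℝ)*Real.log k := by have := Real.log_pos hk1; positivity
      exact (div_le_div_iff_of_pos_right hgpos).mpr (hbounds k).2.1
    · filter_upwards [Filter.eventually_ge_atTop 2] with k hk
      have hk1 : (1:ℝ) < (k:ℝ) := by exact_mod_cast hk
      have hgpos : 0 < (k:ℝ)*Real.log k := by have := Real.log_pos hk1; positivity
      exact (div_le_div_iff_of_pos_right hgpos).mpr (hbounds k).2.2
  have hneg : ∀ᶠ k in Filter.atTop,
      Real.log (Λ k) / ((k:ℝ)*Real.log k) < 0 :=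
    hmain.eventually_lt_const (by norm_num)
  have hev : (fun k : ℕ => -(Real.log (Λ k) / ((k:ℝ)*Real.log k)))
      =ᶠ[Filter.atTop] fun k : ℕ => |Real.log (Λ k)| / ((k:ℝ)*Real.log k) := by
    filter_upwards [hneg, Filter.eventually_ge_atTop 2] with k h1 hk
    have hk1 : (1:ℝ) < (k:ℝ) := by exact_mod_cast hk
    have hgpos : 0 < (k:ℝ)*Real.log k := by have := Real.log_pos hk1; positivity
    have hlogneg : Real.log (Λ k) < 0 := by
      by_contra h
      push_neg at h
      exact absurd (div_nonneg h hgpos.le) (not_le.mpr h1)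
    rw [abs_of_neg hlogneg, neg_div]
  have hfin : Filter.Tendsto (fun k : ℕ => -(Real.log (Λ k) / ((k:ℝ)*Real.log k)))
      Filter.atTop (nhds 1) := by simpa using hmain.neg
  exact hfin.congr' hev
end

section
/- The integral identity ∫_0^R J_ν(r)² r dr = (R²/2)·[J_ν(R)² − J_{ν−1}(R)·J_{ν+1}(R)] for nonnegative integer order ν ≥ 1 and R > 0. -/
/-- Bessel function of the first kind of nonnegative integer order. -/
noncomputable def besselJ (j : ℕ) (r : ℝ) : ℝ :=
  ∑' n : ℕ, (-1 : ℝ) ^ n * (r / 2) ^ (2 * n + j) /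
    ((Nat.factorial n : ℝ) * (Nat.factorial (n + j) : ℝ))

noncomputable def bterm (j n : ℕ) (r : ℝ) : ℝ :=
  (-1 : ℝ) ^ n * (r / 2) ^ (2 * n + j) /
    ((Nat.factorial n : ℝ) * (Nat.factorial (n + j) : ℝ))

noncomputable def bdterm (j n : ℕ) (r : ℝ) : ℝ :=
  (-1 : ℝ) ^ n * (((2 * n + j : ℕ) : ℝ) * (r / 2) ^ (2 * n + j - 1) * (1 / 2)) /
    ((Nat.factorial n : ℝ) * (Nat.factorial (n + j) : ℝ))

noncomputable def bD (j : ℕ) (r : ℝ) : ℝ := ∑' n, bdterm j n r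

lemma besselJ_eq (j : ℕ) (r : ℝ) : besselJ j r = ∑' n, bterm j n r := rfl

lemma fact_ne (n : ℕ) : ((Nat.factorial n : ℝ)) ≠ 0 :=
  Nat.cast_ne_zero.2 (Nat.factorial_ne_zero n)

lemma bterm_norm (j n : ℕ) (r : ℝ) :
    ‖bterm j n r‖ = (|r| / 2) ^ (2 * n + j) /
      ((Nat.factorial n : ℝ) * (Nat.factorial (n + j) : ℝ)) := by
  rw [bterm]
  rw [Real.norm_eq_abs, abs_div, abs_mul, abs_pow, abs_pow, abs_neg, abs_one, one_pow,
    abs_div, abs_mul, Nat.abs_cast, Nat.abs_cast]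
  norm_num

lemma summable_bterm (j : ℕ) (r : ℝ) : Summable fun n => bterm j n r := by
  apply Summable.of_norm
  refine Summable.of_nonneg_of_le (fun n => norm_nonneg _) (fun n => ?_)
    ((Real.summable_pow_div_factorial ((|r| / 2) ^ 2)).mul_left ((|r| / 2) ^ j))
  rw [bterm_norm]
  have h1 : (|r| / 2) ^ (2 * n + j) /
      ((Nat.factorial n : ℝ) * (Nat.factorial (n + j) : ℝ))
      ≤ (|r| / 2) ^ (2 * n + j) / (Nat.factorial n : ℝ) := by
    apply div_le_div_of_nonneg_left (by positivity) (by positivity)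
    calc (Nat.factorial n : ℝ) = (Nat.factorial n : ℝ) * 1 := by ring
    _ ≤ (Nat.factorial n : ℝ) * (Nat.factorial (n + j) : ℝ) := by
        apply mul_le_mul_of_nonneg_left _ (by positivity)
        exact_mod_cast Nat.one_le_iff_ne_zero.2 (Nat.factorial_ne_zero _)
  refine h1.trans (le_of_eq ?_)
  rw [pow_add, pow_mul]
  ring

lemma bdterm_norm_le (j n : ℕ) {M y : ℝ} (hM : 1 ≤ M) (hy : |y| ≤ M) :
    ‖bdterm j n y‖ ≤ (2 * M) ^ j * ((2 * M) ^ 2) ^ n / Nat.factorial n := by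
  have hM0 : (0 : ℝ) < M := lt_of_lt_of_le one_pos hM
  have hnorm : ‖bdterm j n y‖ = ((2 * n + j : ℕ) : ℝ) * (|y| / 2) ^ (2 * n + j - 1) * (1 / 2) /
      ((Nat.factorial n : ℝ) * (Nat.factorial (n + j) : ℝ)) := by
    rw [bdterm, Real.norm_eq_abs, abs_div, abs_mul, abs_pow, abs_neg, abs_one, one_pow,
      abs_mul, abs_mul, abs_pow, abs_div, abs_div, Nat.abs_cast, abs_mul, Nat.abs_cast,
      Nat.abs_cast]
    norm_num
  rw [hnorm]
  have hstep1 : (|y| / 2) ^ (2 * n + j - 1) ≤ M ^ (2 * n + j) := by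
    calc (|y| / 2) ^ (2 * n + j - 1) ≤ M ^ (2 * n + j - 1) := by
          apply pow_le_pow_left₀ (by positivity)
          nlinarith [abs_nonneg y]
    _ ≤ M ^ (2 * n + j) := pow_le_pow_right₀ hM (Nat.sub_le _ _)
  have hstep2 : ((2 * n + j : ℕ) : ℝ) ≤ (2 : ℝ) ^ (2 * n + j) := by
    exact_mod_cast (Nat.lt_two_pow_self (n := 2 * n + j)).le
  calc ((2 * n + j : ℕ) : ℝ) * (|y| / 2) ^ (2 * n + j - 1) * (1 / 2) /
      ((Nat.factorial n : ℝ) * (Nat.factorial (n + j) : ℝ))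
      ≤ (2 : ℝ) ^ (2 * n + j) * M ^ (2 * n + j) * 1 / ((Nat.factorial n : ℝ) * 1) := by
        apply div_le_div₀ (by positivity)
        · have : (0:ℝ) ≤ (|y| / 2) ^ (2 * n + j - 1) := by positivity
          have h2 : (0:ℝ) ≤ ((2 * n + j : ℕ) : ℝ) := by positivity
          nlinarith [pow_nonneg hM0.le (2*n+j), pow_nonneg (show (0:ℝ) ≤ 2 by norm_num) (2*n+j)]
        · positivity
        · apply mul_le_mul_of_nonneg_left _ (by positivity)
          exact_mod_cast Nat.one_le_iff_ne_zero.2 (Nat.factorial_ne_zero _)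
  _ = (2 * M) ^ j * ((2 * M) ^ 2) ^ n / Nat.factorial n := by
      rw [← mul_pow, pow_add, pow_mul]
      ring

lemma summable_bdterm (j : ℕ) (y : ℝ) : Summable fun n => bdterm j n y := by
  apply Summable.of_norm
  refine Summable.of_nonneg_of_le (fun n => norm_nonneg _)
    (fun n => bdterm_norm_le j n (M := |y| + 1) (by linarith [abs_nonneg y]) (by linarith)) ?_
  simpa [mul_div_assoc] using
    (Real.summable_pow_div_factorial ((2 * (|y| + 1)) ^ 2)).mul_left ((2 * (|y| + 1)) ^ j)

lemma hasDerivAt_bterm (j n : ℕ) (y : ℝ) :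
    HasDerivAt (fun r => bterm j n r) (bdterm j n y) y := by
  have h := ((((hasDerivAt_id y).div_const 2).pow (2 * n + j)).const_mul
    ((-1 : ℝ) ^ n)).div_const ((Nat.factorial n : ℝ) * (Nat.factorial (n + j) : ℝ))
  simpa [bterm, bdterm, mul_assoc] using h

lemma besselJ_hasDerivAt (j : ℕ) (r : ℝ) : HasDerivAt (besselJ j) (bD j r) r := by
  have hr1 : (1 : ℝ) ≤ |r| + 1 := by linarith [abs_nonneg r]
  have hmem : r ∈ Set.Ioo (-(|r| + 1)) (|r| + 1) := by
    constructor
    · nlinarith [neg_abs_le r]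
    · nlinarith [le_abs_self r]
  have h := hasDerivAt_tsum_of_isPreconnected
    (u := fun n => (2 * (|r| + 1)) ^ j * ((2 * (|r| + 1)) ^ 2) ^ n / Nat.factorial n)
    (g := fun n z => bterm j n z) (g' := fun n z => bdterm j n z)
    (t := Set.Ioo (-(|r| + 1)) (|r| + 1)) (y₀ := r) (y := r)
    (by simpa [mul_div_assoc] using
      (Real.summable_pow_div_factorial ((2 * (|r| + 1)) ^ 2)).mul_left ((2 * (|r| + 1)) ^ j))
    isOpen_Ioo (convex_Ioo _ _).isPreconnected
    (fun n z _ => hasDerivAt_bterm j n z)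
    (fun n z hz => bdterm_norm_le j n hr1 (abs_le.2 ⟨hz.1.le, hz.2.le⟩))
    hmem (summable_bterm j r) hmem
  have hfun : besselJ j = fun z => ∑' n, bterm j n z := rfl
  rw [hfun, bD]
  exact h

lemma bterm_key1 (j n : ℕ) (r : ℝ) :
    r * bdterm j n r = ((2 * n + j : ℕ) : ℝ) * bterm j n r := by
  rcases Nat.eq_zero_or_pos (2 * n + j) with h | h
  · simp [bdterm, bterm, h]
  · obtain ⟨k, hk⟩ : ∃ k, 2 * n + j = k + 1 := ⟨2 * n + j - 1, by omega⟩
    simp only [bdterm, bterm, hk, Nat.add_sub_cancel, pow_succ]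
    ring

lemma bterm_key2 (j n : ℕ) (r : ℝ) :
    (2 * ((n : ℝ) + 1)) * bterm j (n + 1) r = -(r * bterm (j + 1) n r) := by
  simp only [bterm]
  have e1 : 2 * (n + 1) + j = (2 * n + (j + 1)) + 1 := by ring
  have e2 : n + 1 + j = n + (j + 1) := by omega
  rw [e1, e2, pow_succ, Nat.factorial_succ, pow_succ]
  have h1 := fact_ne n
  have h2 := fact_ne (n + (j + 1))
  have h3 : ((n : ℝ) + 1) ≠ 0 := by positivity
  push_cast
  field_simp

lemma bterm_key3 (m n : ℕ) (r : ℝ) :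
    r * bdterm (m + 1) n r = r * bterm m n r - ((m : ℝ) + 1) * bterm (m + 1) n r := by
  simp only [bdterm, bterm]
  have e1 : 2 * n + (m + 1) - 1 = 2 * n + m := by omega
  have e2 : 2 * n + (m + 1) = (2 * n + m) + 1 := by omega
  have e3 : n + (m + 1) = (n + m) + 1 := by omega
  rw [e1, e2, e3, pow_succ, Nat.factorial_succ]
  have h1 := fact_ne n
  have h2 := fact_ne (n + m)
  have h3 : ((n : ℝ) + (m : ℝ) + 1) ≠ 0 := by positivity
  push_cast
  field_simp
  ring

lemma bD_eq2 (m : ℕ) (r : ℝ) :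
    r * bD (m + 1) r = r * besselJ m r - ((m : ℝ) + 1) * besselJ (m + 1) r := by
  rw [bD, besselJ_eq, besselJ_eq, ← tsum_mul_left, ← tsum_mul_left, ← tsum_mul_left,
    ← Summable.tsum_sub ((summable_bterm m r).mul_left r) ((summable_bterm (m + 1) r).mul_left _)]
  exact tsum_congr fun n => bterm_key3 m n r

lemma bD_eq1 (j : ℕ) (r : ℝ) :
    r * bD j r = (j : ℝ) * besselJ j r - r * besselJ (j + 1) r := by
  have hs2 : Summable (fun n : ℕ => (2 * (n : ℝ)) * bterm j n r) := by
    refine (((summable_bdterm j r).mul_left r).sub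
      ((summable_bterm j r).mul_left (j : ℝ))).congr fun n => ?_
    have h := bterm_key1 j n r
    push_cast at h
    linarith [h]
  have step1 : r * bD j r = (j : ℝ) * besselJ j r + ∑' n : ℕ, (2 * (n : ℝ)) * bterm j n r := by
    rw [bD, besselJ_eq, ← tsum_mul_left, ← tsum_mul_left,
      ← Summable.tsum_add ((summable_bterm j r).mul_left _) hs2]
    refine tsum_congr fun n => ?_
    have h := bterm_key1 j n r
    push_cast at h
    linarith [h]
  have step2 : ∑' n : ℕ, (2 * (n : ℝ)) * bterm j n r = -(r * besselJ (j + 1) r) := by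
    rw [Summable.tsum_eq_zero_add hs2]
    simp only [Nat.cast_zero, mul_zero, zero_mul, zero_add, Nat.cast_add, Nat.cast_one]
    rw [besselJ_eq, ← tsum_mul_left, ← tsum_neg]
    exact tsum_congr fun n => bterm_key2 j n r
  rw [step1, step2]
  ring

theorem stmt13 (ν : ℕ) (hν : 1 ≤ ν) (R : ℝ) (hR : 0 < R) :
    (∫ r in (0 : ℝ)..R, (besselJ ν r) ^ 2 * r) =
      R ^ 2 / 2 * ((besselJ ν R) ^ 2 - besselJ (ν - 1) R * besselJ (ν + 1) R) := by
  obtain ⟨m, rfl⟩ : ∃ m, ν = m + 1 := ⟨ν - 1, by omega⟩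
  simp only [Nat.add_sub_cancel]
  set F : ℝ → ℝ := fun x => x ^ 2 / 2 *
    ((besselJ (m + 1) x) ^ 2 - besselJ m x * besselJ (m + 2) x) with hFdef
  have hc : ∀ j, Continuous (besselJ j) := fun j =>
    Differentiable.continuous (fun x => (besselJ_hasDerivAt j x).differentiableAt)
  have hderiv : ∀ x ∈ Set.Ioo (0 : ℝ) R,
      HasDerivAt F ((besselJ (m + 1) x) ^ 2 * x) x := by
    intro x hx
    have hx0 : x ≠ 0 := ne_of_gt hx.1
    have hD := ((hasDerivAt_pow 2 x).div_const 2).mul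
      (((besselJ_hasDerivAt (m + 1) x).pow 2).sub
        ((besselJ_hasDerivAt m x).mul (besselJ_hasDerivAt (m + 2) x)))
    refine hD.congr_deriv (Eq.symm ?_)
    have e1 : x * bD (m + 1) x = ((m : ℝ) + 1) * besselJ (m + 1) x - x * besselJ (m + 2) x := by
      have h := bD_eq1 (m + 1) x
      simp only [show m + 1 + 1 = m + 2 from rfl] at h
      push_cast at h
      linarith [h]
    have e2 : x * bD (m + 1) x = x * besselJ m x - ((m : ℝ) + 1) * besselJ (m + 1) x :=
      bD_eq2 m x
    have e3 : x * bD m x = (m : ℝ) * besselJ m x - x * besselJ (m + 1) x := bD_eq1 m x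
    have e4 : x * bD (m + 2) x = x * besselJ (m + 1) x - ((m : ℝ) + 2) * besselJ (m + 2) x := by
      have h := bD_eq2 (m + 1) x
      simp only [show m + 1 + 1 = m + 2 from rfl] at h
      push_cast at h
      linarith [h]
    refine mul_left_cancel₀ hx0 ?_
    push_cast
    simp only [Pi.sub_apply, Pi.mul_apply, Pi.pow_apply]
    linear_combination (-(x ^ 2 * besselJ (m + 1) x) / 2) * e1 +
      (-(x ^ 2 * besselJ (m + 1) x) / 2) * e2 + (x ^ 2 * besselJ (m + 2) x / 2) * e3 +
      (x ^ 2 * besselJ m x / 2) * e4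
  have hcont : ContinuousOn F (Set.Icc 0 R) := by
    apply Continuous.continuousOn
    exact ((continuous_pow 2).div_const 2).mul
      (((hc (m + 1)).pow 2).sub ((hc m).mul (hc (m + 2))))
  have hint : IntervalIntegrable (fun x => (besselJ (m + 1) x) ^ 2 * x) MeasureTheory.volume 0 R :=
    (((hc (m + 1)).pow 2).mul continuous_id).intervalIntegrable 0 R
  have key := intervalIntegral.integral_eq_sub_of_hasDeriv_right_of_le hR.le hcont
    (fun x hx => (hderiv x hx).hasDerivWithinAt) hint
  rw [key, hFdef]
  norm_num
end

section
/- Sharpness of the reordering constant: there exists a bijection m : ℕ → ℕ such that, for given β > 1, defining F_β = {m_k : m_k ≤ β k}, one has limsup_{N→∞} N^{-1}·#(F_β ∩ [0,N]) = (β−1)/β. -/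
open Filter Finset Topology
namespace Stmt14Aux

noncomputable def fb (β : ℝ) (k : ℕ) : ℕ := ⌊β * k⌋₊ + 1
def Pset : Set ℕ := {k | ∀ j : ℕ, k ≠ 2 ^ j}
noncomputable def Tset (β : ℝ) : Set ℕ := fb β '' Pset
noncomputable def Sset (β : ℝ) : Set ℕ := (Tset β)ᶜ
open Classical in
noncomputable def mf (β : ℝ) (k : ℕ) : ℕ :=
  if k ∈ Pset then fb β k else Nat.nth (· ∈ Sset β) (Nat.log 2 k)

variable {β : ℝ}

lemma fb_gt (k : ℕ) : β * k < fb β k := by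
  have := Nat.lt_floor_add_one (β * k); simpa [fb] using this

lemma fb_ge (hβ : 1 < β) (k : ℕ) : k < fb β k := by
  have h : (k : ℝ) ≤ β * k := by nlinarith [Nat.cast_nonneg (α := ℝ) k]
  have : k ≤ ⌊β * k⌋₊ := Nat.le_floor h
  simpa [fb] using Nat.lt_succ_of_le this

lemma fb_strictMono (hβ : 1 < β) : StrictMono (fb β) := by
  intro k l hkl
  have hk0 : (0:ℝ) ≤ β * k := by positivity
  have h : β * k + 1 ≤ β * l := by
    have : (k:ℝ) + 1 ≤ l := by exact_mod_cast hkl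
    nlinarith [Nat.cast_nonneg (α := ℝ) k]
  have h2 : ⌊β * k⌋₊ + 1 ≤ ⌊β * l⌋₊ := by
    calc ⌊β * k⌋₊ + 1 = ⌊β * k + 1⌋₊ := (Nat.floor_add_one hk0).symm
    _ ≤ ⌊β * l⌋₊ := Nat.floor_le_floor h
  simp only [fb]; omega

lemma fb_le_iff (hβ : 1 < β) {k N : ℕ} : fb β k ≤ N ↔ k < ⌈(N:ℝ)/β⌉₊ := by
  have hb0 : (0:ℝ) < β := by linarith
  rw [Nat.lt_ceil, lt_div_iff₀ hb0, fb]
  constructor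
  · intro h
    have h1 : ⌊β * k⌋₊ < N := by omega
    have h2 : β * k < N := by
      have := (Nat.floor_lt (by positivity : (0:ℝ) ≤ β * k)).mp h1
      exact this
    linarith [h2]
  · intro h
    have : ⌊β * k⌋₊ < N := (Nat.floor_lt (by positivity)).mpr (by linarith)
    omega

lemma cf_eq (hβ : 1 < β) (N : ℕ) :
    ((range (N+1)).filter (fun k => fb β k ≤ N)).card = ⌈(N:ℝ)/β⌉₊ := by
  have hb0 : (0:ℝ) < β := by linarith
  have hceil : ⌈(N:ℝ)/β⌉₊ ≤ N + 1 := by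
    apply Nat.ceil_le.mpr
    have : (N:ℝ)/β ≤ N := by
      rw [div_le_iff₀ hb0]; nlinarith [Nat.cast_nonneg (α := ℝ) N]
    push_cast; linarith
  have : (range (N+1)).filter (fun k => fb β k ≤ N) = range ⌈(N:ℝ)/β⌉₊ := by
    ext k
    simp only [mem_filter, mem_range, fb_le_iff hβ]
    constructor
    · rintro ⟨_, h⟩; exact h
    · intro h; exact ⟨lt_of_lt_of_le h hceil, h⟩
  rw [this, card_range]

open Classical in
lemma cT_eq (hβ : 1 < β) (N : ℕ) :
    ((range (N+1)).filter (· ∈ Tset β)).card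
      = ((range (N+1)).filter (fun k => k ∈ Pset ∧ fb β k ≤ N)).card := by
  have himg : (range (N+1)).filter (· ∈ Tset β)
      = ((range (N+1)).filter (fun k => k ∈ Pset ∧ fb β k ≤ N)).image (fb β) := by
    ext n
    simp only [mem_filter, mem_range, Finset.mem_image]
    constructor
    · rintro ⟨hn, hT⟩
      obtain ⟨k, hkP, hkf⟩ := hT
      have hkn : k < n := by rw [← hkf]; exact fb_ge hβ k
      exact ⟨k, ⟨by omega, hkP, by omega⟩, hkf⟩
    · rintro ⟨k, ⟨hk1, hk2, hk3⟩, rfl⟩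
      refine ⟨by omega, k, hk2, rfl⟩
  rw [himg, Finset.card_image_of_injective _ (fb_strictMono hβ).injective]

open Classical in
lemma cT_le (hβ : 1 < β) (N : ℕ) :
    ((range (N+1)).filter (· ∈ Tset β)).card ≤ ⌈(N:ℝ)/β⌉₊ := by
  rw [cT_eq hβ N, ← cf_eq hβ N]
  apply Finset.card_le_card
  intro k hk
  simp only [mem_filter] at hk ⊢
  exact ⟨hk.1, hk.2.2⟩

open Classical in
lemma cT_ge (hβ : 1 < β) (N : ℕ) :
    ⌈(N:ℝ)/β⌉₊ ≤ ((range (N+1)).filter (· ∈ Tset β)).card + (Nat.log 2 N + 1) := by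
  rw [cT_eq hβ N, ← cf_eq hβ N]
  have hsub : (range (N+1)).filter (fun k => fb β k ≤ N) ⊆
      (range (N+1)).filter (fun k => k ∈ Pset ∧ fb β k ≤ N)
        ∪ (range (Nat.log 2 N + 1)).image (2 ^ ·) := by
    intro k hk
    simp only [mem_filter, mem_range] at hk
    by_cases hP : k ∈ Pset
    · exact Finset.mem_union_left _ (by simp [mem_filter, mem_range, hk.1, hP, hk.2])
    · simp only [Pset, Set.mem_setOf_eq, not_forall, not_not] at hP
      obtain ⟨j, rfl⟩ := hP
      apply Finset.mem_union_right
      simp only [Finset.mem_image, mem_range]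
      refine ⟨j, ?_, rfl⟩
      have h2N : 2 ^ j ≤ N := le_of_lt (lt_of_lt_of_le (fb_ge hβ _) hk.2)
      have hp : 0 < 2 ^ j := pow_pos (by norm_num) j
      have hN0 : N ≠ 0 := by omega
      have := (Nat.le_log_iff_pow_le (by norm_num) hN0).mpr h2N
      omega
  calc ((range (N+1)).filter (fun k => fb β k ≤ N)).card
      ≤ _ := Finset.card_le_card hsub
    _ ≤ _ + ((range (Nat.log 2 N + 1)).image (2 ^ ·)).card := Finset.card_union_le _ _
    _ ≤ _ + (Nat.log 2 N + 1) := by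
        gcongr
        exact (Finset.card_image_le).trans (by rw [card_range])

open Classical in
lemma sS_sum (N : ℕ) :
    ((range (N+1)).filter (· ∈ Sset β)).card + ((range (N+1)).filter (· ∈ Tset β)).card
      = N + 1 := by
  have h := Finset.card_filter_add_card_filter_not
    (s := range (N+1)) (p := (· ∈ Tset β))
  have he : (range (N+1)).filter (fun n => ¬ n ∈ Tset β) = (range (N+1)).filter (· ∈ Sset β) := by
    apply Finset.filter_congr
    intro n _
    simp [Sset]
  rw [he, Finset.card_range] at h
  omega

open Classical in
lemma sS_lb (hβ : 1 < β) (N : ℕ) :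
    (N:ℝ) - N/β ≤ ((range (N+1)).filter (· ∈ Sset β)).card := by
  have h := sS_sum (β := β) N
  have hle := cT_le hβ N
  have hceil : (⌈(N:ℝ)/β⌉₊ : ℝ) < (N:ℝ)/β + 1 := Nat.ceil_lt_add_one (by positivity)
  have hcast : (((range (N+1)).filter (· ∈ Sset β)).card : ℝ)
      + (((range (N+1)).filter (· ∈ Tset β)).card : ℝ) = (N:ℝ) + 1 := by exact_mod_cast h
  have : (((range (N+1)).filter (· ∈ Tset β)).card : ℝ) ≤ (⌈(N:ℝ)/β⌉₊ : ℝ) := by exact_mod_cast hle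
  linarith

open Classical in
lemma sS_ub (hβ : 1 < β) (N : ℕ) :
    (((range (N+1)).filter (· ∈ Sset β)).card : ℝ) ≤ (N:ℝ) + 2 + (Nat.log 2 N) - N/β := by
  have h := sS_sum (β := β) N
  have hge := cT_ge hβ N
  have hceil : (N:ℝ)/β ≤ (⌈(N:ℝ)/β⌉₊ : ℝ) := Nat.le_ceil _
  have hcast : (((range (N+1)).filter (· ∈ Sset β)).card : ℝ)
      + (((range (N+1)).filter (· ∈ Tset β)).card : ℝ) = (N:ℝ) + 1 := by exact_mod_cast h
  have hge' : (⌈(N:ℝ)/β⌉₊ : ℝ)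
      ≤ (((range (N+1)).filter (· ∈ Tset β)).card : ℝ) + ((Nat.log 2 N : ℝ) + 1) := by
    exact_mod_cast hge
  linarith

open Classical in
lemma S_infinite (hβ : 1 < β) : (Sset β).Infinite := by
  by_contra hinf
  rw [Set.not_infinite] at hinf
  have hfin := hinf
  set C := hfin.toFinset.card with hC
  obtain ⟨N, hN⟩ := exists_nat_gt ((C + 1) * β / (β - 1))
  have hb1 : (0:ℝ) < β - 1 := by linarith
  have hb0 : (0:ℝ) < β := by linarith
  have hcard : ((range (N+1)).filter (· ∈ Sset β)).card ≤ C := by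
    apply Finset.card_le_card
    intro n hn
    simp only [mem_filter] at hn
    exact hfin.mem_toFinset.mpr hn.2
  have h1 : (N:ℝ) - N/β ≤ C := le_trans (sS_lb hβ N) (by exact_mod_cast hcard)
  have h2 : ((C:ℝ) + 1) * β < N * (β - 1) := by
    rw [div_lt_iff₀ hb1] at hN
    linarith
  have h3 : (N:ℝ) - N/β = N * (β - 1) / β := by field_simp
  rw [h3] at h1
  rw [div_le_iff₀ hb0] at h1
  nlinarith

open Classical in
lemma nth_le (hβ : 1 < β) {j x : ℕ}
    (h : j + 1 ≤ ((range (x+1)).filter (· ∈ Sset β)).card) :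
    Nat.nth (· ∈ Sset β) j ≤ x := by
  have hinf : {n | n ∈ Sset β}.Infinite := by
    exact S_infinite hβ
  by_contra hc
  push_neg at hc
  have h1 : Nat.count (· ∈ Sset β) (x+1) ≤ Nat.count (· ∈ Sset β) (Nat.nth (· ∈ Sset β) j) :=
    Nat.count_monotone _ hc
  rw [Nat.count_nth_of_infinite hinf] at h1
  rw [Nat.count_eq_card_filter_range] at h1
  have he : (range (x+1)).filter (· ∈ Sset β) = {y ∈ range (x+1) | y ∈ Sset β} := rfl
  omega

lemma two_mul_le_two_pow : ∀ C : ℕ, 2 * C ≤ 2 ^ C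
  | 0 => by norm_num
  | (n+1) => by
      have h := Nat.lt_two_pow_self (n := n)
      rw [pow_succ]
      omega

lemma mul_le_two_pow (C : ℕ) : ∀ j, 2 * C ≤ j → (j + 1) * C ≤ 2 ^ j := by
  intro j hj
  rcases Nat.eq_zero_or_pos C with rfl | hC
  · simpa using Nat.one_le_two_pow
  have h1 : j - C + 1 ≤ 2 ^ (j - C) := Nat.lt_two_pow_self
  have h2 : 2 * C ≤ 2 ^ C := two_mul_le_two_pow C
  have h3 : 2 ^ j = 2 ^ (j - C) * 2 ^ C := by rw [← pow_add]; congr 1; omega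
  have h4 : (j + 1) * C ≤ (j - C + 1) * (2 * C) := by
    have : j + 1 ≤ 2 * (j - C + 1) := by omega
    calc (j + 1) * C ≤ (2 * (j - C + 1)) * C := Nat.mul_le_mul_right _ this
      _ = (j - C + 1) * (2 * C) := by ring
  calc (j + 1) * C ≤ (j - C + 1) * (2 * C) := h4
    _ ≤ 2 ^ (j - C) * 2 ^ C := Nat.mul_le_mul h1 h2
    _ = 2 ^ j := h3.symm

open Classical in
lemma nth_le_pow (hβ : 1 < β) : ∃ J : ℕ, ∀ j, J ≤ j →
    (Nat.nth (· ∈ Sset β) j : ℝ) ≤ β * 2 ^ j := by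
  have hb1 : (0:ℝ) < β - 1 := by linarith
  have hb0 : (0:ℝ) < β := by linarith
  set c : ℝ := β / (β - 1) + 1 with hc
  have hc0 : (0:ℝ) ≤ c := by positivity
  refine ⟨2 * ⌈c⌉₊, fun j hj => ?_⟩
  set C : ℕ := ⌈c⌉₊ with hC
  set x : ℕ := ⌈((j:ℝ)+1) * β / (β - 1)⌉₊ with hx
  have hxge : ((j:ℝ)+1) * β / (β - 1) ≤ x := Nat.le_ceil _
  have hcount : j + 1 ≤ ((range (x+1)).filter (· ∈ Sset β)).card := by
    have h1 : ((j:ℝ)+1) ≤ (x:ℝ) - x/β := by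
      rw [div_le_iff₀ hb1] at hxge
      have heq : (x:ℝ) - x/β = x * (β-1)/β := by field_simp
      rw [heq, le_div_iff₀ hb0]
      nlinarith
    have h2 := sS_lb hβ x
    have h3 : ((j:ℝ)+1) ≤ (((range (x+1)).filter (· ∈ Sset β)).card : ℝ) := by linarith
    exact_mod_cast h3
  have hnth : (Nat.nth (· ∈ Sset β) j : ℝ) ≤ (x:ℝ) := by
    exact_mod_cast nth_le hβ hcount
  have hxlt : (x:ℝ) < ((j:ℝ)+1) * β / (β - 1) + 1 :=
    Nat.ceil_lt_add_one (by positivity)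
  have hpow : ((j:ℝ)+1) * C ≤ 2 ^ j := by
    exact_mod_cast mul_le_two_pow C j hj
  have hcC : c ≤ (C:ℝ) := Nat.le_ceil c
  have hble : ((j:ℝ)+1) * β / (β - 1) + 1 ≤ ((j:ℝ)+1) * c := by
    rw [hc, mul_add, mul_one, mul_div_assoc]
    have : (0:ℝ) ≤ (j:ℝ) := Nat.cast_nonneg j
    linarith
  have hcc : ((j:ℝ)+1) * c ≤ ((j:ℝ)+1) * C := by
    apply mul_le_mul_of_nonneg_left hcC
    positivity
  have hp2 : (0:ℝ) < (β - 1) * 2 ^ j := by positivity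
  have hexp : β * 2 ^ j = 2 ^ j + (β - 1) * 2 ^ j := by ring
  clear_value c C x
  have hstep : (Nat.nth (· ∈ Sset β) j : ℝ) ≤ 2 ^ j := by linarith
  linarith

lemma not_Pset {k : ℕ} (h : k ∉ Pset) : ∃ j, k = 2 ^ j := by
  simpa [Pset] using h

open Classical in
lemma mf_bijective (hβ : 1 < β) : Function.Bijective (mf β) := by
  have hinf : {n | n ∈ Sset β}.Infinite := S_infinite hβ
  constructor
  · intro a b hab
    by_cases ha : a ∈ Pset <;> by_cases hb : b ∈ Pset <;>
      simp only [mf, ha, hb, if_true, if_false, if_pos, if_neg, not_false_iff] at hab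
    · exact (fb_strictMono hβ).injective hab
    · exfalso
      have h1 : fb β a ∈ Tset β := ⟨a, ha, rfl⟩
      have h2 : Nat.nth (· ∈ Sset β) (Nat.log 2 b) ∈ Sset β := Nat.nth_mem_of_infinite hinf _
      rw [hab] at h1; exact h2 h1
    · exfalso
      have h1 : fb β b ∈ Tset β := ⟨b, hb, rfl⟩
      have h2 : Nat.nth (· ∈ Sset β) (Nat.log 2 a) ∈ Sset β := Nat.nth_mem_of_infinite hinf _
      rw [← hab] at h1; exact h2 h1
    · obtain ⟨i, rfl⟩ := not_Pset ha
      obtain ⟨j, rfl⟩ := not_Pset hb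
      rw [Nat.log_pow (by norm_num), Nat.log_pow (by norm_num)] at hab
      rw [Nat.nth_injective hinf hab]
  · intro n
    by_cases hn : n ∈ Tset β
    · obtain ⟨k, hkP, hkf⟩ := hn
      refine ⟨k, ?_⟩
      rw [mf, if_pos hkP]; exact hkf
    · have hnS : n ∈ Sset β := hn
      refine ⟨2 ^ (Nat.count (· ∈ Sset β) n), ?_⟩
      have hP : (2:ℕ) ^ (Nat.count (· ∈ Sset β) n) ∉ Pset := by
        intro h; exact h (Nat.count (· ∈ Sset β) n) rfl
      rw [mf, if_neg hP, Nat.log_pow (by norm_num)]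
      exact Nat.nth_count hnS

lemma log_div_tendsto : Tendsto (fun N : ℕ => (Nat.log 2 N : ℝ) / N) atTop (𝓝 0) := by
  have h1 : Tendsto (fun x : ℝ => Real.log x / x) atTop (𝓝 0) := by
    have := Real.isLittleO_log_id_atTop.tendsto_div_nhds_zero
    simpa using this
  have h2 : Tendsto (fun N : ℕ => Real.log N / N) atTop (𝓝 0) :=
    h1.comp tendsto_natCast_atTop_atTop
  have hlog2 : (0:ℝ) < Real.log 2 := Real.log_pos (by norm_num)
  have h3 : Tendsto (fun N : ℕ => (1/Real.log 2) * (Real.log N / N)) atTop (𝓝 0) := by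
    simpa using h2.const_mul (1/Real.log 2)
  apply tendsto_of_tendsto_of_tendsto_of_le_of_le' tendsto_const_nhds h3
  · filter_upwards with N
    positivity
  · filter_upwards [eventually_ge_atTop 1] with N hN
    have hN0 : (0:ℝ) < N := by exact_mod_cast hN
    have hNne : N ≠ 0 := by omega
    have hle : (2:ℕ) ^ (Nat.log 2 N) ≤ N := Nat.pow_log_le_self 2 hNne
    have hle' : ((2:ℝ)) ^ (Nat.log 2 N) ≤ (N:ℝ) := by exact_mod_cast hle
    have hlog : (Nat.log 2 N : ℝ) * Real.log 2 ≤ Real.log N := by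
      have := Real.log_le_log (by positivity) hle'
      rwa [Real.log_pow] at this
    rw [div_le_iff₀ hN0]
    have hR : (1/Real.log 2 * (Real.log N / N)) * N = Real.log N / Real.log 2 := by
      field_simp
    rw [hR, le_div_iff₀ hlog2]
    linarith

open Classical in
lemma mf_of_mem {k : ℕ} (hk : k ∈ Pset) : mf β k = fb β k := by simp [mf, hk]

open Classical in
lemma mf_of_not_mem {k : ℕ} (hk : k ∉ Pset) :
    mf β k = Nat.nth (· ∈ Sset β) (Nat.log 2 k) := by simp [mf, hk]

end Stmt14Aux

open Stmt14Aux

open Classical in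
theorem stmt14 (β : ℝ) (hβ : 1 < β) :
    ∃ m : ℕ → ℕ, Function.Bijective m ∧
      Filter.limsup
        (fun N : ℕ =>
          (((Finset.range (N + 1)).filter
            (fun n => ∃ k : ℕ, m k = n ∧ (m k : ℝ) ≤ β * k)).card : ℝ) / N)
        Filter.atTop = (β - 1) / β := by
  have hb0 : (0:ℝ) < β := by linarith
  have hinf : {n | n ∈ Sset β}.Infinite := S_infinite hβ
  obtain ⟨J, hJ⟩ := nth_le_pow hβ
  refine ⟨mf β, mf_bijective hβ, ?_⟩
  have hFsub : ∀ N : ℕ,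
      ((range (N+1)).filter (fun n => ∃ k : ℕ, mf β k = n ∧ (mf β k : ℝ) ≤ β * k))
        ⊆ (range (N+1)).filter (· ∈ Sset β) := by
    intro N n hn
    rw [mem_filter] at hn ⊢
    obtain ⟨hn1, k, hmk, hle⟩ := hn
    refine ⟨hn1, ?_⟩
    by_cases hk : k ∈ Pset
    · exfalso
      rw [mf_of_mem hk] at hle
      exact absurd hle (not_le.mpr (fb_gt k))
    · rw [mf_of_not_mem hk] at hmk
      rw [← hmk]
      exact Nat.nth_mem_of_infinite hinf _
  have hSsub : ∀ N : ℕ, (range (N+1)).filter (· ∈ Sset β) ⊆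
      ((range (N+1)).filter (fun n => ∃ k : ℕ, mf β k = n ∧ (mf β k : ℝ) ≤ β * k))
        ∪ (range J).image (Nat.nth (· ∈ Sset β)) := by
    intro N n hn
    rw [mem_filter] at hn
    obtain ⟨hn1, hnS⟩ := hn
    have hnth : Nat.nth (· ∈ Sset β) (Nat.count (· ∈ Sset β) n) = n := Nat.nth_count hnS
    set j := Nat.count (· ∈ Sset β) n with hj
    by_cases hjJ : j < J
    · exact Finset.mem_union_right _ (Finset.mem_image.mpr ⟨j, mem_range.mpr hjJ, hnth⟩)
    · push_neg at hjJ
      apply Finset.mem_union_left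
      rw [mem_filter]
      have hP : (2:ℕ) ^ j ∉ Pset := fun h => h j rfl
      refine ⟨hn1, 2 ^ j, ?_, ?_⟩
      · rw [mf_of_not_mem hP, Nat.log_pow (by norm_num)]
        exact hnth
      · rw [mf_of_not_mem hP, Nat.log_pow (by norm_num), hnth]
        have hb := hJ j hjJ
        rw [hnth] at hb
        push_cast
        exact hb
  have key : Filter.Tendsto (fun N : ℕ =>
      (((Finset.range (N + 1)).filter
        (fun n => ∃ k : ℕ, mf β k = n ∧ (mf β k : ℝ) ≤ β * k)).card : ℝ) / N)
      Filter.atTop (𝓝 ((β - 1) / β)) := by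
    have hval : (β - 1) / β = 1 - 1/β := by field_simp
    rw [hval]
    have hlo : Filter.Tendsto (fun N : ℕ => (1 - 1/β) - (J:ℝ) * (1/(N:ℝ)))
        Filter.atTop (𝓝 (1 - 1/β)) := by
      have := tendsto_one_div_atTop_nhds_zero_nat.const_mul (J:ℝ)
      have h2 := (tendsto_const_nhds :
        Filter.Tendsto (fun _ : ℕ => (1 - 1/β : ℝ)) Filter.atTop (𝓝 (1 - 1/β))).sub this
      simpa using h2
    have hhi : Filter.Tendsto (fun N : ℕ =>
        (1 - 1/β) + 2 * (1/(N:ℝ)) + (Nat.log 2 N : ℝ)/N)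
        Filter.atTop (𝓝 (1 - 1/β)) := by
      have h1 := tendsto_one_div_atTop_nhds_zero_nat.const_mul (2:ℝ)
      have h2 := ((tendsto_const_nhds :
        Filter.Tendsto (fun _ : ℕ => (1 - 1/β : ℝ)) Filter.atTop (𝓝 (1 - 1/β))).add h1).add
        log_div_tendsto
      simpa using h2
    apply tendsto_of_tendsto_of_tendsto_of_le_of_le' hlo hhi
    · filter_upwards [Filter.eventually_ge_atTop 1] with N hN
      have hN0 : (0:ℝ) < N := by exact_mod_cast hN
      have hcard : ((range (N+1)).filter (· ∈ Sset β)).card ≤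
          ((Finset.range (N + 1)).filter
            (fun n => ∃ k : ℕ, mf β k = n ∧ (mf β k : ℝ) ≤ β * k)).card + J := by
        refine (Finset.card_le_card (hSsub N)).trans ?_
        refine (Finset.card_union_le _ _).trans ?_
        gcongr
        exact Finset.card_image_le.trans (by rw [card_range])
      have h1 : (N:ℝ) - N/β - J ≤
          (((Finset.range (N + 1)).filter
            (fun n => ∃ k : ℕ, mf β k = n ∧ (mf β k : ℝ) ≤ β * k)).card : ℝ) := by
        have hlb := sS_lb hβ N
        have hc : (((range (N+1)).filter (· ∈ Sset β)).card : ℝ) ≤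
            (((Finset.range (N + 1)).filter
              (fun n => ∃ k : ℕ, mf β k = n ∧ (mf β k : ℝ) ≤ β * k)).card : ℝ) + J := by
          exact_mod_cast hcard
        linarith
      rw [le_div_iff₀ hN0]
      have hid : ((1 - 1/β) - (J:ℝ) * (1/(N:ℝ))) * N = (N:ℝ) - N/β - J := by
        field_simp
      linarith [hid, h1]
    · filter_upwards [Filter.eventually_ge_atTop 1] with N hN
      have hN0 : (0:ℝ) < N := by exact_mod_cast hN
      have h2 : ((((Finset.range (N + 1)).filter
            (fun n => ∃ k : ℕ, mf β k = n ∧ (mf β k : ℝ) ≤ β * k)).card : ℝ)) ≤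
          (N:ℝ) + 2 + (Nat.log 2 N : ℝ) - N/β := by
        have hub := sS_ub hβ N
        have hc : (((Finset.range (N + 1)).filter
            (fun n => ∃ k : ℕ, mf β k = n ∧ (mf β k : ℝ) ≤ β * k)).card : ℝ) ≤
            (((range (N+1)).filter (· ∈ Sset β)).card : ℝ) := by
          exact_mod_cast Finset.card_le_card (hFsub N)
        linarith
      rw [div_le_iff₀ hN0]
      have hid : ((1 - 1/β) + 2 * (1/(N:ℝ)) + (Nat.log 2 N : ℝ)/N) * N
          = (N:ℝ) + 2 + (Nat.log 2 N : ℝ) - N/β := by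
        field_simp
        ring
      linarith [hid, h2]
  exact key.limsup_eq
end

section
/- Lower bound for the positive part: with q > p > 1 and I₊(k) = ∫_0^∞ t^{(k+2)/q − 1} e^{−t^{p/q}} max(sin t, 0) dt, there exist a constant C > 0 and k₀ such that I₊(k) ≥ C·Γ((k+2)/p) for all k ≥ k₀. -/
open Real Set MeasureTheory Filter


lemma aux_half_le_sin {x : ℝ} (h1 : π/6 ≤ x) (h2 : x ≤ 5*π/6) : 1/2 ≤ Real.sin x := by
  have hπ := Real.pi_pos
  rcases le_total x (π/2) with h | h
  · rw [← Real.sin_pi_div_six]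
    exact Real.strictMonoOn_sin.monotoneOn ⟨by linarith, by linarith⟩ ⟨by linarith, h⟩ h1
  · rw [← Real.sin_pi_sub, ← Real.sin_pi_div_six]
    exact Real.strictMonoOn_sin.monotoneOn ⟨by linarith, by linarith⟩ ⟨by linarith, by linarith⟩
      (by linarith)

lemma aux_exp_quarter : Real.exp (8⁻¹ + 8⁻¹) ≤ 2 := by
  have h : Real.exp (8⁻¹ + 8⁻¹) ^ (4:ℕ) = Real.exp 1 := by
    rw [← Real.exp_nat_mul]; norm_num
  nlinarith [Real.exp_one_lt_d9, Real.exp_pos (8⁻¹ + 8⁻¹ : ℝ), sq_nonneg (Real.exp (8⁻¹+8⁻¹) - 1),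
    sq_nonneg (Real.exp (8⁻¹+8⁻¹))]

lemma aux_gamma_lb {x : ℝ} (hx : 2 ≤ x) :
    (x-1)^(x-1) * Real.exp (-x) ≤ Real.Gamma x := by
  have hx0 : (0:ℝ) < x := by linarith
  rw [Real.Gamma_eq_integral hx0]
  have hInt : IntegrableOn (fun t : ℝ => Real.exp (-t) * t ^ (x-1)) (Ioi 0) :=
    Real.GammaIntegral_convergent hx0
  have hsub : Ioc (x-1) x ⊆ Ioi (0:ℝ) := fun t ht => lt_of_lt_of_le (by linarith) ht.1.le
  have h1 : (x-1)^(x-1) * Real.exp (-x)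
      ≤ ∫ t in Ioc (x-1) x, Real.exp (-t) * t ^ (x-1) := by
    have hconst : ∫ _ in Ioc (x-1) x, ((x-1)^(x-1) * Real.exp (-x)) =
        (x-1)^(x-1) * Real.exp (-x) := by
      rw [setIntegral_const, measureReal_def, Real.volume_Ioc, smul_eq_mul]
      rw [ENNReal.toReal_ofReal (by linarith)]
      ring
    rw [← hconst]
    refine setIntegral_mono_on (integrableOn_const (by simp [Real.volume_Ioc]))
      (hInt.mono_set hsub) measurableSet_Ioc (fun t ht => ?_)
    have ht1 : x - 1 ≤ t := ht.1.le
    have ht0 : (0:ℝ) ≤ x - 1 := by linarith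
    rw [mul_comm]
    exact mul_le_mul (Real.exp_le_exp.2 (by linarith [ht.2])) (Real.rpow_le_rpow ht0 ht1 ht0)
      (Real.rpow_nonneg ht0 _) (Real.exp_pos _).le
  refine h1.trans (setIntegral_mono_set hInt ?_ (HasSubset.Subset.eventuallyLE hsub))
  filter_upwards [ae_restrict_mem measurableSet_Ioi] with t ht
  exact mul_nonneg (Real.exp_pos _).le (Real.rpow_nonneg (le_of_lt ht) _)

lemma aux_ratio {r a c s t : ℝ} (hr0 : 0 < r) (hr1 : r < 1) (ha : 1 ≤ a)
    (hc : 16*π*a ≤ c) (hc2 : (16*π)^((1-r)⁻¹) ≤ c)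
    (hs : s ∈ Icc c (c+2*π)) (ht : t ∈ Icc c (c+2*π)) :
    s ^ (a-1) * Real.exp (-s^r) ≤ 2 * (t ^ (a-1) * Real.exp (-t^r)) := by
  have hπ := Real.pi_pos
  have hcpos : (0:ℝ) < c := lt_of_lt_of_le (by nlinarith) hc
  have hs0 : (0:ℝ) < s := lt_of_lt_of_le hcpos hs.1
  have ht0 : (0:ℝ) < t := lt_of_lt_of_le hcpos ht.1
  have ha0 : (0:ℝ) ≤ a - 1 := by linarith
  -- Part A : s ^ (a-1) ≤ t^(a-1) * exp (1/8)
  have hA : s ^ (a-1) ≤ t ^ (a-1) * Real.exp 8⁻¹ := by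
    have h1 : s ≤ t + 2*π := by linarith [hs.2, ht.1]
    have h2 : s ^ (a-1) ≤ (t + 2*π) ^ (a-1) := Real.rpow_le_rpow hs0.le h1 ha0
    have h3 : (t + 2*π) ^ (a-1) = t ^ (a-1) * (1 + 2*π/t) ^ (a-1) := by
      rw [← Real.mul_rpow ht0.le (by positivity)]
      congr 1
      field_simp
    have h4 : (1 + 2*π/t) ^ (a-1) ≤ Real.exp ((2*π/t) * (a-1)) := by
      rw [Real.exp_mul]
      exact Real.rpow_le_rpow (by positivity) (Real.add_one_le_exp _ |>.trans_eq' (by ring)) ha0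
    have h5 : (2*π/t) * (a-1) ≤ 8⁻¹ := by
      have htc : 16*π*a ≤ t := hc.trans ht.1
      rw [div_mul_eq_mul_div, div_le_iff₀ ht0]
      nlinarith
    calc s ^ (a-1) ≤ t ^ (a-1) * (1 + 2*π/t) ^ (a-1) := h3 ▸ h2
      _ ≤ t ^ (a-1) * Real.exp 8⁻¹ :=
        mul_le_mul_of_nonneg_left ((h4.trans (Real.exp_le_exp.2 h5))) (Real.rpow_nonneg ht0.le _)
  -- Part B : exp (-s^r) ≤ exp (-t^r) * exp (1/8)
  have hB : Real.exp (-s^r) ≤ Real.exp (-t^r) * Real.exp 8⁻¹ := by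
    rw [← Real.exp_add]
    refine Real.exp_le_exp.2 ?_
    -- t^r ≤ s^r + 1/8
    have h1 : t ≤ s + 2*π := by linarith [ht.2, hs.1]
    have h2 : t ^ r ≤ (s + 2*π) ^ r := Real.rpow_le_rpow ht0.le h1 hr0.le
    have h3 : (s + 2*π) ^ r = s ^ r * (1 + 2*π/s) ^ r := by
      rw [← Real.mul_rpow hs0.le (by positivity)]
      congr 1
      field_simp
    have hds : (0:ℝ) ≤ 2*π/s := by positivity
    have h4 : (1 + 2*π/s) ^ r ≤ 1 + r * (2*π/s) :=
      rpow_one_add_le_one_add_mul_self (by linarith) hr0.le hr1.le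
    have h5 : s ^ r * (r * (2*π/s)) ≤ 8⁻¹ := by
      have hP : (0:ℝ) < s ^ r := Real.rpow_pos_of_pos hs0 r
      have hsr : s ^ r * (r * (2*π/s)) ≤ 2*π * s^(r-1) := by
        rw [Real.rpow_sub hs0, Real.rpow_one, div_eq_mul_inv, div_eq_mul_inv]
        nlinarith [mul_nonneg (mul_nonneg hP.le (inv_pos.2 hs0).le) hπ.le]
      refine hsr.trans ?_
      have hsc : s ^ (r-1) ≤ ((16*π)^((1-r)⁻¹)) ^ (r-1) :=
        Real.rpow_le_rpow_of_nonpos (Real.rpow_pos_of_pos (by positivity) _)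
          (hc2.trans hs.1) (by linarith)
      have e1 : ((16*π)^((1-r)⁻¹)) ^ (r-1) = (16*π) ^ ((1-r)⁻¹ * (r-1)) :=
        (Real.rpow_mul (by positivity) _ _).symm
      have e2 : (1-r)⁻¹ * (r-1) = -1 := by
        have : (1:ℝ) - r ≠ 0 := by linarith
        field_simp
        ring
      calc 2*π*s^(r-1) ≤ 2*π*(((16*π)^((1-r)⁻¹))^(r-1)) :=
            mul_le_mul_of_nonneg_left hsc (by positivity)
        _ = 2*π*(16*π)⁻¹ := by rw [e1, e2, Real.rpow_neg_one]
        _ ≤ 8⁻¹ := by rw [mul_inv_le_iff₀ (by positivity)]; nlinarith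
    have h6 : t ^ r ≤ s ^ r + 8⁻¹ := by
      calc t ^ r ≤ s ^ r * (1 + r * (2*π/s)) := h2.trans (h3 ▸
          mul_le_mul_of_nonneg_left h4 (Real.rpow_nonneg hs0.le _))
        _ = s ^ r + s ^ r * (r * (2*π/s)) := by ring
        _ ≤ s ^ r + 8⁻¹ := by linarith
    linarith
  calc s ^ (a-1) * Real.exp (-s^r) ≤ (t ^ (a-1) * Real.exp 8⁻¹) * (Real.exp (-t^r) * Real.exp 8⁻¹) :=
        mul_le_mul hA hB (Real.exp_pos _).le (by positivity)
    _ = (t ^ (a-1) * Real.exp (-t^r)) * Real.exp (8⁻¹ + 8⁻¹) := by rw [Real.exp_add]; ring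
    _ ≤ 2 * (t ^ (a-1) * Real.exp (-t^r)) := by
        rw [mul_comm]
        exact mul_le_mul_of_nonneg_right aux_exp_quarter (by positivity)

lemma aux_eventually {lam D r : ℝ} (hlam : 1 < lam) (hD : 1 ≤ D) (hr0 : 0 < r) :
    ∀ᶠ a in atTop, (D*a)^a / a ≤ 1/2 * (1/r) * Real.Gamma (lam * a) := by
  set μ : ℝ := (1+lam)/2 with hμ
  have hμ1 : 1 < μ := by rw [hμ]; linarith
  have hμ0 : (0:ℝ) < μ := by linarith
  have hlog : Tendsto (fun a : ℝ => (μ-1) * Real.log a) atTop atTop :=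
    Real.tendsto_log_atTop.const_mul_atTop (by linarith)
  filter_upwards [eventually_ge_atTop (1:ℝ), eventually_ge_atTop (2/(lam-1)),
    eventually_ge_atTop (1/μ), eventually_ge_atTop (2/lam), eventually_ge_atTop (Real.log (2*r)),
    hlog.eventually_ge_atTop (lam + Real.log D - μ * Real.log μ + 1)] with a h1 h2 h3 h4 h5 h6
  have ha0 : (0:ℝ) < a := by linarith
  have hla2 : 2 ≤ lam * a := by
    have := (div_le_iff₀ (by linarith : (0:ℝ) < lam)).mp h4
    nlinarith
  have hμa1 : 1 ≤ μ * a := by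
    have := (div_le_iff₀ hμ0).mp h3
    nlinarith
  have hstep : μ * a ≤ lam * a - 1 := by
    have := (div_le_iff₀ (by linarith : (0:ℝ) < lam - 1)).mp h2
    have hμe : μ = (1+lam)/2 := hμ
    nlinarith
  have hla1 : (0:ℝ) < lam * a - 1 := by linarith
  -- monotonicity of u * log u on [1, ∞)
  have hmono : (μ*a) * Real.log (μ*a) ≤ (lam*a-1) * Real.log (lam*a-1) :=
    mul_le_mul hstep (Real.log_le_log (by linarith) hstep) (Real.log_nonneg hμa1) (by linarith)
  -- exponent inequality
  have hexp : Real.log (D*a) * a - Real.log a ≤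
      -(Real.log (2*r)) + (Real.log (lam*a-1) * (lam*a-1) - lam*a) := by
    have e1 : Real.log (μ*a) = Real.log μ + Real.log a := Real.log_mul (by positivity) (by positivity)
    have e2 : Real.log (D*a) = Real.log D + Real.log a := Real.log_mul (by positivity) (by positivity)
    have hbr : 1 ≤ (μ-1) * Real.log a + μ * Real.log μ - Real.log D - lam := by linarith
    have hloga : 0 ≤ Real.log a := Real.log_nonneg h1
    rw [e1] at hmono
    rw [e2]
    nlinarith [mul_le_mul_of_nonneg_left hbr ha0.le]
  -- convert to the original inequality via exp
  have hDa : (0:ℝ) < D*a := by positivity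
  have hgl := aux_gamma_lb hla2
  have key : (D*a)^a / a ≤ 1/(2*r) * ((lam*a-1)^(lam*a-1) * Real.exp (-(lam*a))) := by
    have l1 : (D*a)^a / a = Real.exp (Real.log (D*a) * a - Real.log a) := by
      rw [Real.exp_sub, Real.exp_log ha0, ← Real.rpow_def_of_pos hDa]
    have l2 : 1/(2*r) * ((lam*a-1)^(lam*a-1) * Real.exp (-(lam*a))) =
        Real.exp (-(Real.log (2*r)) + (Real.log (lam*a-1) * (lam*a-1) - lam*a)) := by
      rw [Real.exp_add, Real.exp_sub, ← Real.rpow_def_of_pos hla1, Real.exp_neg,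
        Real.exp_neg (Real.log (2*r)), Real.exp_log (by positivity : (0:ℝ) < 2*r)]
      ring
    rw [l1, l2]
    exact Real.exp_le_exp.2 hexp
  calc (D*a)^a / a ≤ 1/(2*r) * ((lam*a-1)^(lam*a-1) * Real.exp (-(lam*a))) := key
    _ ≤ 1/(2*r) * Real.Gamma (lam*a) := by
        refine mul_le_mul_of_nonneg_left ?_ (by positivity)
        simpa using hgl
    _ = 1/2 * (1/r) * Real.Gamma (lam*a) := by ring





set_option maxHeartbeats 1000000 in
theorem stmt16 (p q : ℝ) (hp : 1 < p) (hpq : p < q) :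
    ∃ C > (0 : ℝ), ∃ k₀ : ℕ, ∀ k ≥ k₀,
      C * Real.Gamma (((k : ℝ) + 2) / p) ≤
        ∫ t in Set.Ioi (0 : ℝ),
          t ^ (((k : ℝ) + 2) / q - 1) * Real.exp (-t ^ (p / q)) * max (Real.sin t) 0 := by
  have hπ := Real.pi_pos
  have hπ3 := Real.pi_gt_three
  have hq0 : (0:ℝ) < q := by linarith
  have hp0 : (0:ℝ) < p := by linarith
  obtain ⟨r, hrdef⟩ : ∃ r : ℝ, r = p / q := ⟨_, rfl⟩
  have hr0 : 0 < r := hrdef ▸ div_pos hp0 hq0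
  have hr1 : r < 1 := hrdef ▸ (div_lt_one hq0).2 hpq
  obtain ⟨lam, hlamdef⟩ : ∃ l : ℝ, l = q / p := ⟨_, rfl⟩
  have hlam1 : 1 < lam := hlamdef ▸ (one_lt_div hp0).2 hpq
  have hlamr : lam = 1 / r := by rw [hlamdef, hrdef]; field_simp
  obtain ⟨C0, hC0def⟩ : ∃ c : ℝ, c = (16*π) ^ ((1-r)⁻¹) := ⟨_, rfl⟩
  have hC00 : 0 < C0 := hC0def ▸ Real.rpow_pos_of_pos (by positivity) _
  obtain ⟨D, hDdef⟩ : ∃ d : ℝ, d = 18*π + C0 := ⟨_, rfl⟩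
  have hD1 : 1 ≤ D := by rw [hDdef]; nlinarith
  obtain ⟨A₀, hA₀⟩ := (aux_eventually hlam1 hD1 hr0).exists_forall_of_atTop
  obtain ⟨Athr, hAthr⟩ : ∃ A : ℝ, A = max (max 1 C0) A₀ := ⟨_, rfl⟩
  refine ⟨1/24 * (1/r), by positivity, ⌈q * Athr⌉₊, fun k hk => ?_⟩
  -- the parameter a
  obtain ⟨a, hadef⟩ : ∃ a : ℝ, a = ((k:ℝ) + 2) / q := ⟨_, rfl⟩
  have haA : Athr ≤ a := by
    have h1 : q * Athr ≤ (k:ℝ) := le_trans (Nat.le_ceil _) (Nat.cast_le.2 hk)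
    rw [hadef, le_div_iff₀ hq0]
    nlinarith
  have ha1 : 1 ≤ a := le_trans (le_trans (le_max_left _ _) (hAthr ▸ le_max_left _ _)) haA
  have haC0 : C0 ≤ a := le_trans (le_trans (le_max_right _ _) (hAthr ▸ le_max_left _ _)) haA
  have ha0 : (0:ℝ) < a := by linarith
  have hKa : lam * a = ((k:ℝ)+2)/p := by
    rw [hlamdef, hadef]; field_simp
  -- the eventual bound
  have hev : (D*a)^a / a ≤ 1/2 * (1/r) * Real.Gamma (((k:ℝ)+2)/p) := by
    rw [← hKa]; exact hA₀ a (le_trans (hAthr ▸ le_max_right _ _) haA)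
  -- definitions
  obtain ⟨f, hfdef⟩ : ∃ f : ℝ → ℝ, f = fun t => t ^ (a-1) * Real.exp (-t^r) := ⟨_, rfl⟩
  obtain ⟨F, hFdef⟩ : ∃ F : ℝ → ℝ, F = fun t => f t * max (Real.sin t) 0 := ⟨_, rfl⟩
  obtain ⟨T, hTdef⟩ : ∃ T : ℝ, T = max (16*π*a) C0 := ⟨_, rfl⟩
  obtain ⟨m, hmdef⟩ : ∃ m : ℕ, m = ⌈T/(2*π)⌉₊ := ⟨_, rfl⟩
  obtain ⟨B, hBdef⟩ : ∃ B : ℝ, B = 2*π*m := ⟨_, rfl⟩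
  have hT0 : 0 < T := lt_of_lt_of_le (by positivity) (hTdef ▸ le_max_left _ _)
  have hT16 : 16*π*a ≤ T := hTdef ▸ le_max_left _ _
  have hTC0 : C0 ≤ T := hTdef ▸ le_max_right _ _
  have hTB : T ≤ B := by
    have h1 := Nat.le_ceil (T/(2*π))
    rw [← hmdef, div_le_iff₀ (by positivity)] at h1
    rw [hBdef]
    linarith
  have hB0 : 0 < B := lt_of_lt_of_le hT0 hTB
  have hBT : B ≤ T + 2*π := by
    have h2 : (m:ℝ) < T/(2*π) + 1 := by
      rw [hmdef]; exact Nat.ceil_lt_add_one (by positivity)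
    have h3 : 2*π*(m:ℝ) ≤ 2*π*(T/(2*π)+1) :=
      mul_le_mul_of_nonneg_left h2.le (by positivity)
    have h4 : 2*π*(T/(2*π)+1) = T + 2*π := by field_simp
    rw [hBdef]; linarith
  have hBD : B ≤ D*a := by
    have hTa : T ≤ 16*π*a + C0 := hTdef ▸ max_le (by nlinarith) (by nlinarith)
    have h5 : C0 ≤ C0 * a := by nlinarith
    have h6 : D*a = 18*π*a + C0*a := by rw [hDdef]; ring
    nlinarith
  -- integrability of f
  have hIntf : IntegrableOn f (Ioi 0) := by
    have hlamne : lam ≠ 0 := by positivity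
    have hlr : lam * r = 1 := by rw [hlamr]; field_simp
    refine (integrableOn_Ioi_comp_rpow_iff' f hlamne).mp ?_
    refine ((Real.GammaIntegral_convergent (s := lam*a) (by positivity)).congr_fun
      (fun x hx => ?_) measurableSet_Ioi)
    have hx0 : (0:ℝ) < x := hx
    rw [smul_eq_mul, hfdef]
    simp only []
    rw [← Real.rpow_mul hx0.le lam (a-1), ← Real.rpow_mul hx0.le lam r, hlr, Real.rpow_one,
      ← mul_assoc, mul_comm (Real.exp (-x)) _, ← Real.rpow_add hx0]
    congr 2
    ring
  -- value of the full integral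
  have hval : ∫ t in Ioi 0, f t = (1/r) * Real.Gamma (((k:ℝ)+2)/p) := by
    rw [hfdef]
    rw [integral_rpow_mul_exp_neg_rpow (p := r) (q := a-1) hr0 (by linarith)]
    congr 1
    rw [← hKa, hlamr]
    field_simp
    ring_nf
  -- continuity, integrability and nonnegativity of F
  have hcontF : Continuous F := by
    rw [hFdef, hfdef]
    exact ((Real.continuous_rpow_const (by linarith)).mul
      ((Real.continuous_rpow_const hr0.le).neg.rexp)).mul
      (Real.continuous_sin.max continuous_const)
  have hf0 : ∀ t : ℝ, 0 < t → 0 ≤ f t := by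
    intro t ht
    rw [hfdef]
    positivity
  have hIntF : IntegrableOn F (Ioi 0) := by
    refine hIntf.mono' hcontF.aestronglyMeasurable ?_
    filter_upwards [ae_restrict_mem measurableSet_Ioi] with t ht
    have ht0 : (0:ℝ) < t := ht
    have h1 : (0:ℝ) ≤ max (Real.sin t) 0 := le_max_right _ _
    have h2 : max (Real.sin t) 0 ≤ 1 := max_le (Real.sin_le_one t) zero_le_one
    rw [hFdef, Real.norm_eq_abs]
    simp only []
    rw [abs_of_nonneg (mul_nonneg (hf0 t ht0) h1)]
    nlinarith [hf0 t ht0]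
  have hF0 : 0 ≤ᵐ[volume.restrict (Ioi 0)] F := by
    filter_upwards [ae_restrict_mem measurableSet_Ioi] with t ht
    have ht0 : (0:ℝ) < t := ht
    rw [hFdef]
    exact mul_nonneg (hf0 t ht0) (le_max_right _ _)
  -- the grid
  obtain ⟨x, hxdef⟩ : ∃ x : ℕ → ℝ, x = fun n : ℕ => B + 2*π*(n:ℝ) := ⟨_, rfl⟩
  have hx0B : x 0 = B := by simp [hxdef]
  have hxsucc : ∀ n, x (n+1) = x n + 2*π := by
    intro n; simp only [hxdef]; push_cast; ring
  have hxB : ∀ n, B ≤ x n := by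
    intro n
    have hn : (0:ℝ) ≤ (n:ℝ) := Nat.cast_nonneg n
    simp only [hxdef]
    nlinarith
  obtain ⟨G, hGdef⟩ : ∃ G : ℕ → Set ℝ, G = fun n => Ioc (x n + π/6) (x n + 5*π/6) := ⟨_, rfl⟩
  have hGsub : ∀ n, G n ⊆ Ioi 0 := by
    intro n t ht
    simp only [hGdef, mem_Ioc] at ht
    have h1 := ht.1
    have h2 := hxB n
    simp only [mem_Ioi]
    linarith
  -- key per-period estimate
  have hkey : ∀ n : ℕ, ∫ t in (x n)..(x (n+1)), f t ≤ 12 * ∫ t in G n, F t := by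
    intro n
    have hc16 : 16*π*a ≤ x n := le_trans (le_trans hT16 hTB) (hxB n)
    have hcC0 : C0 ≤ x n := le_trans (le_trans hTC0 hTB) (hxB n)
    have hc0 : 0 < x n := lt_of_lt_of_le hB0 (hxB n)
    have hIoc : Ioc (x n) (x n + 2*π) ⊆ Ioi 0 := fun t ht => lt_trans hc0 ht.1
    have hIntfc : IntegrableOn f (Ioc (x n) (x n + 2*π)) := hIntf.mono_set hIoc
    have hIntFG : IntegrableOn F (G n) := hIntF.mono_set (hGsub n)
    obtain ⟨Ic, hIcdef⟩ : ∃ I : ℝ, I = ∫ t in Ioc (x n) (x n + 2*π), f t := ⟨_, rfl⟩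
    -- pointwise bound on G n
    have hpt : ∀ t ∈ G n, Ic / (8*π) ≤ F t := by
      intro t ht
      simp only [hGdef, mem_Ioc] at ht
      have htmem : t ∈ Icc (x n) (x n + 2*π) := ⟨by linarith [ht.1], by linarith [ht.2]⟩
      have hub : Ic ≤ 4*π * f t := by
        have h1 : Ic ≤ ∫ _ in Ioc (x n) (x n + 2*π), 2 * f t := by
          rw [hIcdef, hfdef]
          refine setIntegral_mono_on ?_
            (integrableOn_const (by rw [Real.volume_Ioc]; exact ENNReal.ofReal_ne_top)) measurableSet_Ioc
            (fun s hs => ?_)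
          · rw [← hfdef]; exact hIntfc
          · exact aux_ratio hr0 hr1 ha1 hc16 (hC0def ▸ hcC0) ⟨hs.1.le, hs.2⟩ htmem
        rw [setIntegral_const, measureReal_def, Real.volume_Ioc, smul_eq_mul,
          ENNReal.toReal_ofReal (by linarith), show x n + 2*π - x n = 2*π by ring] at h1
        nlinarith
      have hsin : 1/2 ≤ Real.sin t := by
        have hmn : x n = ((m+n : ℕ) : ℤ) * (2*π) := by
          simp only [hxdef, hBdef]; push_cast; ring
        have := aux_half_le_sin (x := t - ((m+n:ℕ):ℤ) * (2*π))
          (by rw [← hmn]; linarith [ht.1]) (by rw [← hmn]; linarith [ht.2])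
        rwa [Real.sin_sub_int_mul_two_pi] at this
      have ht0 : (0:ℝ) < t := by linarith [ht.1]
      have hFt : f t * (1/2) ≤ F t := by
        rw [hFdef]
        exact mul_le_mul_of_nonneg_left (le_max_of_le_left hsin) (hf0 t ht0)
      rw [div_le_iff₀ (by positivity)]
      nlinarith [hf0 t ht0]
    -- integrate over G n
    have hGmeas : MeasurableSet (G n) := by simp only [hGdef]; exact measurableSet_Ioc
    have hGvol : volume (G n) = ENNReal.ofReal (2*π/3) := by
      simp only [hGdef, Real.volume_Ioc]
      congr 1
      ring
    have hGint : Ic / 12 ≤ ∫ t in G n, F t := by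
      have h1 : ∫ _ in G n, (Ic / (8*π)) ≤ ∫ t in G n, F t :=
        setIntegral_mono_on
          (integrableOn_const (by rw [hGvol]; exact ENNReal.ofReal_ne_top))
          hIntFG hGmeas hpt
      rw [setIntegral_const, smul_eq_mul, measureReal_def, hGvol, ENNReal.toReal_ofReal (by positivity)] at h1
      have h8 : 2*π/3 * (Ic / (8*π)) = Ic / 12 := by field_simp; ring
      linarith
    have hIcval : ∫ t in (x n)..(x (n+1)), f t = Ic := by
      rw [hxsucc n, intervalIntegral.integral_of_le (by linarith), hIcdef]
    rw [hIcval]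
    linarith
  -- interval integrability for adjacent sums
  have hfc : ∀ n : ℕ, IntervalIntegrable f volume (x n) (x (n+1)) := by
    intro n
    rw [intervalIntegrable_iff_integrableOn_Ioc_of_le (by rw [hxsucc n]; linarith)]
    exact hIntf.mono_set (fun t ht => lt_trans (lt_of_lt_of_le hB0 (hxB n)) ht.1)
  -- sum bound for every M
  have hM : ∀ M : ℕ, ∫ t in (x 0)..(x M), f t ≤ 12 * ∫ t in Ioi 0, F t := by
    intro M
    rw [← intervalIntegral.sum_integral_adjacent_intervals (fun n _ => hfc n)]
    have hdisj : Set.Pairwise ↑(Finset.range M) (Function.onFun Disjoint G) := by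
      intro i _ j _ hij
      simp only [Function.onFun, hGdef]
      rw [Set.Ioc_disjoint_Ioc]
      rcases lt_or_gt_of_ne hij with h | h
      · have hle : (i:ℝ) + 1 ≤ j := by exact_mod_cast h
        refine le_trans (min_le_left _ _) (le_trans ?_ (le_max_right _ _))
        simp only [hxdef]; nlinarith
      · have hle : (j:ℝ) + 1 ≤ i := by exact_mod_cast h
        refine le_trans (min_le_right _ _) (le_trans ?_ (le_max_left _ _))
        simp only [hxdef]; nlinarith
    have hsum : ∑ n ∈ Finset.range M, ∫ t in (x n)..(x (n+1)), f t ≤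
        ∑ n ∈ Finset.range M, 12 * ∫ t in G n, F t :=
      Finset.sum_le_sum (fun n _ => hkey n)
    have hbiUnion : ∑ n ∈ Finset.range M, ∫ t in G n, F t = ∫ t in ⋃ n ∈ Finset.range M, G n, F t :=
      (integral_biUnion_finset (Finset.range M)
        (fun n _ => by simp only [hGdef]; exact measurableSet_Ioc)
        hdisj (fun n _ => hIntF.mono_set (hGsub n))).symm
    have hsub2 : (⋃ n ∈ Finset.range M, G n) ⊆ Ioi 0 := by
      intro t ht
      simp only [Set.mem_iUnion] at ht
      obtain ⟨n, _, hn⟩ := ht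
      exact hGsub n hn
    have hmono : ∫ t in ⋃ n ∈ Finset.range M, G n, F t ≤ ∫ t in Ioi 0, F t :=
      setIntegral_mono_set hIntF hF0 (HasSubset.Subset.eventuallyLE hsub2)
    calc ∑ n ∈ Finset.range M, ∫ t in (x n)..(x (n+1)), f t
        ≤ ∑ n ∈ Finset.range M, 12 * ∫ t in G n, F t := hsum
      _ = 12 * ∫ t in ⋃ n ∈ Finset.range M, G n, F t := by rw [← Finset.mul_sum, hbiUnion]
      _ ≤ 12 * ∫ t in Ioi 0, F t := by linarith
  -- pass to the limit
  have hIntfB : IntegrableOn f (Ioi B) := hIntf.mono_set (fun t ht => lt_trans hB0 ht)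
  have htendx : Tendsto x atTop atTop := by
    rw [hxdef]
    exact tendsto_atTop_add_const_left _ B
      ((tendsto_natCast_atTop_atTop).const_mul_atTop (by positivity))
  have htend := intervalIntegral_tendsto_integral_Ioi B hIntfB htendx
  have hIB : ∫ t in Ioi B, f t ≤ 12 * ∫ t in Ioi 0, F t := by
    refine le_of_tendsto htend (Eventually.of_forall (fun M => ?_))
    have := hM M
    rwa [hx0B] at this
  -- splitting the full integral
  have hIntf0B : IntegrableOn f (Ioc 0 B) := hIntf.mono_set Set.Ioc_subset_Ioi_self
  have hsplit : ∫ t in Ioi 0, f t = (∫ t in Ioc 0 B, f t) + ∫ t in Ioi B, f t := by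
    rw [← setIntegral_union Set.Ioc_disjoint_Ioi_same measurableSet_Ioi hIntf0B hIntfB,
      Set.Ioc_union_Ioi_eq_Ioi hB0.le]
  -- bound on the initial piece
  have hinit : ∫ t in Ioc 0 B, f t ≤ (D*a)^a / a := by
    have h1 : ∫ t in Ioc 0 B, f t ≤ ∫ t in Ioc 0 B, t ^ (a-1) := by
      refine setIntegral_mono_on hIntf0B ?_ measurableSet_Ioc (fun t ht => ?_)
      · rw [← intervalIntegrable_iff_integrableOn_Ioc_of_le hB0.le]
        exact intervalIntegral.intervalIntegrable_rpow' (by linarith)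
      · have ht0 : (0:ℝ) < t := ht.1
        have he : Real.exp (-t^r) ≤ 1 :=
          Real.exp_le_one_iff.2 (neg_nonpos.2 (Real.rpow_nonneg ht0.le r))
        have hpw : (0:ℝ) < t ^ (a-1) := Real.rpow_pos_of_pos ht0 _
        rw [hfdef]
        simp only []
        calc t^(a-1) * Real.exp (-t^r) ≤ t^(a-1) * 1 := mul_le_mul_of_nonneg_left he hpw.le
          _ = t^(a-1) := mul_one _
    have h2 : ∫ t in Ioc 0 B, t ^ (a-1) = B ^ a / a := by
      rw [← intervalIntegral.integral_of_le hB0.le, integral_rpow (Or.inl (by linarith))]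
      rw [Real.zero_rpow (by linarith), sub_add_cancel, sub_zero]
    have h3 : B ^ a ≤ (D*a) ^ a := Real.rpow_le_rpow hB0.le hBD ha0.le
    rw [h2] at h1
    refine h1.trans ?_
    gcongr
  -- final chain
  have hfinal : 1/2 * (1/r) * Real.Gamma (((k:ℝ)+2)/p) ≤ 12 * ∫ t in Ioi 0, F t := by
    have h1 := hsplit
    rw [hval] at h1
    linarith
  have hgoal : (∫ t in Ioi 0, F t) =
      ∫ t in Set.Ioi (0:ℝ),
        t ^ (((k : ℝ) + 2) / q - 1) * Real.exp (-t ^ (p / q)) * max (Real.sin t) 0 := by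
    rw [hFdef, hfdef, ← hadef, ← hrdef]
  rw [← hgoal]
  linarith
end
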